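/- arXiv:2603.29008 — 4 statements merged into one kernel-verified Lean document; each statement's English description precedes it below -/
import Mathlib

section
/- Let Γ be a finite simple graph and n ≥ 0 an integer. If Γ either is a complete graph with n+1 vertices, or contains a complete subgraph Λ of size n together with a subgraph Λ₀ ⊆ Λ whose removal disconnects Γ, then the right-angled Artin group A(Γ) splits non-trivially over a subgroup isomorphic to ℤ^n. -/
/-!
If `Γ` is the complete graph on `n + 1` vertices, `A(Γ) = ℤ^(n+1)` is the HNN extension of `ℤ^n`
along the identity.

Otherwise `Λ₀ ⊆ Λ` separates `Γ`. The clique `Λ \ Λ₀` lies in one component of `Γ - Λ₀`, so some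
other component `Y` misses `Λ`; every edge of `Γ` then lies in `Y ∪ Λ` or in `Γ - Y`, and `A(Γ)` is
the amalgam `A(Y ∪ Λ) *_{ℤ^Λ} A(Γ - Y)`. Its second factor may be `A(Λ)` itself, so to make that
embedding proper each vertex `m ∈ Λ \ Λ₀` is identified with `m²` in `A(Γ - Y)`: the first factor
maps to `A(Γ)` by `m ↦ m²`. This is still an amalgam decomposition of `A(Γ)` because `m` has no
neighbour in `Y`.
-/

/-! ## Right-angled Artin groups -/

/-- The commutator relations defining the right-angled Artin group of a graph. -/
def raagRels {V : Type*} (Γ : SimpleGraph V) : Set (FreeGroup V) :=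
  {r | ∃ u v : V, Γ.Adj u v ∧
    r = FreeGroup.of u * FreeGroup.of v * (FreeGroup.of u)⁻¹ * (FreeGroup.of v)⁻¹}

/-- The right-angled Artin group of a simple graph. -/
abbrev RAAG {V : Type*} (Γ : SimpleGraph V) : Type _ := PresentedGroup (raagRels Γ)

/-- The canonical generator of `RAAG Γ` associated to a vertex. -/
abbrev RAAG.gen {V : Type*} (Γ : SimpleGraph V) (v : V) : RAAG Γ :=
  PresentedGroup.of v

/-- The canonical generating set of a right-angled Artin group: its vertex generators. -/
def raagGens {V : Type*} (Γ : SimpleGraph V) : Set (RAAG Γ) :=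
  Set.range (RAAG.gen Γ)

/-- The subgroup of `RAAG Γ` generated by (the generators corresponding to) a set of
vertices. -/
def vertexSubgroup {V : Type*} (Γ : SimpleGraph V) (Λ : Set V) : Subgroup (RAAG Γ) :=
  Subgroup.closure (RAAG.gen Γ '' Λ)

/-! ## Free abelian groups ℤ^n (written multiplicatively) -/

/-- The free abelian group `ℤ^n` of rank `n`, written multiplicatively. -/
abbrev FreeAb (n : ℕ) : Type := Multiplicative (Fin n → ℤ)

/-! ## Word metric and coarse separation -/

section Coarse

variable {G : Type*} [Group G]

/-- `S` is a finite generating set of `G`. -/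
def IsFinGenSet (S : Set G) : Prop := S.Finite ∧ Subgroup.closure S = ⊤

/-- One step in the Cayley graph of `(G, S)`: multiply on the right by a generator or
the inverse of a generator. -/
def WordStep (S : Set G) (x y : G) : Prop := ∃ s : G, (s ∈ S ∨ s⁻¹ ∈ S) ∧ y = x * s

/-- The word distance between two elements of `G`, with respect to the (symmetrised)
generating set `S`, with value `⊤` if `y` is not reachable from `x`. -/
noncomputable def wordDist (S : Set G) (x y : G) : ℕ∞ :=
  sInf {n : ℕ∞ | ∃ l : List G, (∀ s ∈ l, s ∈ S ∨ s⁻¹ ∈ S) ∧ y = x * l.prod ∧ n = l.length}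

/-- The word distance from a subset `A ⊆ G` to a point. -/
noncomputable def setWordDist (S : Set G) (A : Set G) (x : G) : ℕ∞ :=
  ⨅ a ∈ A, wordDist S a x

/-- The (closed) `L`-neighbourhood of a subset `A ⊆ G` in the word metric of `S`. -/
def wordNbhd (S : Set G) (A : Set G) (L : ℕ) : Set G :=
  {x | setWordDist S A x ≤ (L : ℕ∞)}

/-- Two points are connected within the subset `K` of the Cayley graph of `(G, S)` if they
are joined by a path of the Cayley graph staying in `K`. -/
def ConnectedInCayley (S : Set G) (K : Set G) (x y : G) : Prop :=
  Relation.ReflTransGen (fun a b => a ∈ K ∧ b ∈ K ∧ WordStep S a b) x y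

/-- The connected component of `x` in `K ⊆ G` (for the Cayley graph of `(G,S)`) is *deep*
with respect to `A`: it contains points arbitrarily far away from `A`. -/
def DeepComponent (S : Set G) (A : Set G) (K : Set G) (x : G) : Prop :=
  ∀ D : ℕ, ∃ y : G, ConnectedInCayley S K x y ∧ (D : ℕ∞) < setWordDist S A y

/-- A subset `A ⊆ G` *coarsely separates* `G` (with respect to the word metric associated
to `S`): the complement of some neighbourhood of `A` has at least two deep connected
components. -/
def CoarselySeparates (S : Set G) (A : Set G) : Prop :=
  ∃ L : ℕ, ∃ x y : G, x ∈ (wordNbhd S A L)ᶜ ∧ y ∈ (wordNbhd S A L)ᶜ ∧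
    ¬ ConnectedInCayley S (wordNbhd S A L)ᶜ x y ∧
    DeepComponent S A (wordNbhd S A L)ᶜ x ∧ DeepComponent S A (wordNbhd S A L)ᶜ y

end Coarse

/-! ## Splittings of groups -/

/-- The amalgamated free product of two groups along two injections of a common
subgroup, built as a quotient of the free product `Monoid.Coprod`. -/
def AmalgamatedProduct {A B C : Type*} [Group A] [Group B] [Group C]
    (φ₁ : C →* A) (φ₂ : C →* B) : Type _ :=
  (Monoid.Coprod A B) ⧸ Subgroup.normalClosure
    (Set.range fun c => Monoid.Coprod.inl (φ₁ c) * (Monoid.Coprod.inr (φ₂ c))⁻¹)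

noncomputable instance {A B C : Type*} [Group A] [Group B] [Group C]
    (φ₁ : C →* A) (φ₂ : C →* B) : Group (AmalgamatedProduct φ₁ φ₂) := by
  unfold AmalgamatedProduct; infer_instance

/-- A non-trivial decomposition of `G` as an amalgamated free product `A *_C B`,
with edge group `C`. -/
structure AmalgamSplitting (G : Type u) [Group G] (C : Type v) [Group C] where
  A : Type u
  B : Type u
  [grpA : Group A]
  [grpB : Group B]
  φ₁ : C →* A
  φ₂ : C →* B
  inj₁ : Function.Injective φ₁
  inj₂ : Function.Injective φ₂
  notSurj₁ : ¬ Function.Surjective φ₁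
  notSurj₂ : ¬ Function.Surjective φ₂
  iso : G ≃* AmalgamatedProduct φ₁ φ₂

/-- A decomposition of `G` as an HNN extension with edge group (isomorphic to) `C`. -/
structure HNNSplitting (G : Type u) [Group G] (C : Type v) [Group C] where
  K : Type u
  [grpK : Group K]
  A : Subgroup K
  B : Subgroup K
  φ : A ≃* B
  isoC : C ≃* A
  iso : G ≃* HNNExtension K A B φ

/-- `G` splits (non-trivially) over a subgroup isomorphic to `C`: it decomposes
non-trivially as an amalgamated free product or as an HNN extension with edge group `C`. -/
def SplitsOver (G : Type u) [Group G] (C : Type v) [Group C] : Prop :=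
  Nonempty (AmalgamSplitting G C) ∨ Nonempty (HNNSplitting G C)

/-- `G` virtually splits over (a subgroup isomorphic to) `C`: some finite-index subgroup
of `G` splits over a subgroup isomorphic to `C`. -/
def VirtuallySplitsOver (G : Type u) [Group G] (C : Type v) [Group C] : Prop :=
  ∃ H : Subgroup G, H.FiniteIndex ∧ SplitsOver H C

/-! ## Graph-theoretic conditions -/

section Graph

variable {V : Type*}

/-- Removing the vertex set `s` from `Γ` disconnects the graph: the induced subgraph on
the complement of `s` is not preconnected. -/
def SeparatesGraph (Γ : SimpleGraph V) (s : Set V) : Prop :=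
  ¬ (Γ.induce {v : V | v ∉ s}).Preconnected

/-- `Γ` is a complete graph. -/
def IsCompleteGraph (Γ : SimpleGraph V) : Prop := ∀ u v : V, u ≠ v → Γ.Adj u v

/-- A *complete cut* of a graph: a complete subgraph (clique) whose removal disconnects
the graph. -/
def CompleteCut (Γ : SimpleGraph V) (s : Set V) : Prop :=
  Γ.IsClique s ∧ SeparatesGraph Γ s

/-- Condition (iv) of the main theorem: `Γ` is a complete graph with `n+1` vertices, or
contains a complete subgraph of size `n` having a subgraph that separates `Γ`. -/
def CliqueCutCondition (Γ : SimpleGraph V) [Fintype V] (n : ℕ) : Prop :=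
  (IsCompleteGraph Γ ∧ Fintype.card V = n + 1) ∨
  (∃ t : Finset V, Γ.IsNClique n t ∧ ∃ s : Set V, s ⊆ ↑t ∧ SeparatesGraph Γ s)

end Graph

/-! ## Links and stars -/

section LinkStar

variable {V : Type*}

/-- The link of a set of vertices: all vertices adjacent to every vertex of `Λ`. -/
def linkSet (Γ : SimpleGraph V) (Λ : Set V) : Set V := {v | ∀ u ∈ Λ, Γ.Adj v u}

/-- The star of a set of vertices: `Λ` together with its link. -/
def starSet (Γ : SimpleGraph V) (Λ : Set V) : Set V := Λ ∪ linkSet Γ Λ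

/-- The star of a vertex: the vertex together with its neighbours. -/
def starOfVertex (Γ : SimpleGraph V) (u : V) : Set V := {v | v = u ∨ Γ.Adj u v}

end LinkStar

/-! ## Coarse geometry of graphs -/

section CoarseGraph

variable {W : Type*}

/-- The `L`-neighbourhood of a set of vertices in a graph, for the graph metric. -/
def graphNbhd (X : SimpleGraph W) (A : Set W) (L : ℕ) : Set W :=
  {x | ∃ a ∈ A, X.dist a x ≤ L}

/-- Two vertices are connected within `K`: joined by a path of `X` staying in `K`. -/
def ConnectedWithin (X : SimpleGraph W) (K : Set W) (x y : W) : Prop :=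
  Relation.ReflTransGen (fun a b => a ∈ K ∧ b ∈ K ∧ X.Adj a b) x y

/-- `x` is at graph distance at least `D` from every point of `A`. -/
def FarFrom (X : SimpleGraph W) (A : Set W) (D : ℕ) (x : W) : Prop :=
  ∀ a ∈ A, D ≤ X.dist a x

/-- A subset `Y` of a graph is coarsely connected: for some `r ≥ 0`, any two points of `Y`
are joined by an `r`-chain inside `Y`. -/
def CoarselyConnectedIn (X : SimpleGraph W) (Y : Set W) : Prop :=
  ∃ r : ℕ, ∀ x ∈ Y, ∀ y ∈ Y,
    Relation.ReflTransGen (fun a b => a ∈ Y ∧ b ∈ Y ∧ X.dist a b ≤ r) x y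

/-- A subset `Y` of a graph `X` is coarsely separated by a family `Zs` of subsets:
for some `L ≥ 0` and every `D ≥ 0`, there is `Z ∈ Zs` such that `Y` minus the
`L`-neighbourhood of `Z` has at least two connected components containing points at
distance at least `D` from `Z`. -/
def CoarselySeparatedByFamily (X : SimpleGraph W) (Y : Set W) (Zs : Set (Set W)) : Prop :=
  ∃ L : ℕ, ∀ D : ℕ, ∃ Z ∈ Zs, ∃ x ∈ Y \ graphNbhd X Z L, ∃ y ∈ Y \ graphNbhd X Z L,
    ¬ ConnectedWithin X (Y \ graphNbhd X Z L) x y ∧ FarFrom X Z D x ∧ FarFrom X Z D y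

/-- `Z` coarsely separates `Y` from `W'` in the graph `X`: some neighbourhood of `Z`
separates all points of `Y` sufficiently far from `Z` from all points of `W'`
sufficiently far from `Z`. -/
def CoarselySeparatesFrom (X : SimpleGraph W) (Z Y W' : Set W) : Prop :=
  ∃ L D₀ : ℕ, ∀ y ∈ Y, ∀ w ∈ W', FarFrom X Z D₀ y → FarFrom X Z D₀ w →
    ¬ ConnectedWithin X (graphNbhd X Z L)ᶜ y w

namespace FreeAb

open Multiplicative

variable {n : ℕ} {G : Type*} [Group G]

def basis (i : Fin n) : FreeAb n := ofAdd (Pi.single i 1)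

lemma basis_zpow (i : Fin n) (k : ℤ) : basis i ^ k = ofAdd (Pi.single i k) := by
  rw [basis, ← ofAdd_zsmul, ← Pi.single_smul, smul_eq_mul, mul_one]

lemma closure_range_basis : Subgroup.closure (Set.range (basis (n := n))) = ⊤ := by
  refine (Subgroup.eq_top_iff' _).2 fun x => ?_
  have hx : x = ∏ i, basis i ^ toAdd x i := by
    simp_rw [basis_zpow, ← ofAdd_sum, Finset.univ_sum_single]
    rfl
  rw [hx]
  exact Subgroup.prod_mem _ fun i _ =>
    Subgroup.zpow_mem _ (Subgroup.subset_closure (Set.mem_range_self i)) _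

lemma hom_ext {f g : FreeAb n →* G} (h : ∀ i, f (basis i) = g (basis i)) : f = g := by
  have hfg : Set.EqOn f g (Subgroup.closure (Set.range (basis (n := n))) : Set (FreeAb n)) :=
    MonoidHom.eqOn_closure (by rintro _ ⟨i, rfl⟩; exact h i)
  rw [closure_range_basis] at hfg
  exact DFunLike.ext _ _ fun x => hfg (Subgroup.mem_top x)

noncomputable def lift (g : Fin n → G) (hg : ∀ i j, Commute (g i) (g j)) : FreeAb n →* G :=
  (MonoidHom.noncommPiCoprod (fun i => zpowersHom G (g i))
    fun i j _ x y => (hg i j).zpow_zpow (toAdd x) (toAdd y)).comp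
    (MulEquiv.funMultiplicative (Fin n) ℤ).toMonoidHom

@[simp]
lemma lift_basis (g : Fin n → G) (hg : ∀ i j, Commute (g i) (g j)) (i : Fin n) :
    lift g hg (basis i) = g i := by
  have h : MulEquiv.funMultiplicative (Fin n) ℤ (basis i) = Pi.mulSingle i (ofAdd 1) := by
    funext j
    by_cases hj : j = i <;>
      simp [MulEquiv.funMultiplicative, MulEquiv.piMultiplicative, basis, hj]
  simp only [lift, MonoidHom.comp_apply, MulEquiv.toMonoidHom_eq_coe, MonoidHom.coe_coe, h]
  exact (MonoidHom.noncommPiCoprod_mulSingle _ i _).trans (by simp)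

def scale (k : Fin n → ℤ) : FreeAb n →* FreeAb n where
  toFun x := ofAdd (k * toAdd x)
  map_one' := by simp
  map_mul' x y := by simp [mul_add]

lemma scale_basis (k : Fin n → ℤ) (i : Fin n) : scale k (basis i) = basis i ^ k i := by
  rw [basis_zpow]
  refine congrArg ofAdd (funext fun j => ?_)
  by_cases hj : j = i <;> simp [basis, hj]

lemma scale_injective {k : Fin n → ℤ} (hk : ∀ i, k i ≠ 0) : Function.Injective (scale k) := by
  intro x y hxy
  funext i
  exact mul_left_cancel₀ (hk i) (congrFun (ofAdd.injective hxy) i)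

end FreeAb

namespace RAAG

open Multiplicative

variable {U : Type*} (Δ : SimpleGraph U) {G : Type*} [Group G]

def lift (f : U → G) (hf : ∀ u v, Δ.Adj u v → Commute (f u) (f v)) : RAAG Δ →* G :=
  PresentedGroup.toGroup (f := f) <| by
    rintro _ ⟨u, v, huv, rfl⟩
    simpa [commutatorElement_def] using commutatorElement_eq_one_iff_commute.2 (hf u v huv)

@[simp]
lemma lift_gen (f : U → G) (hf : ∀ u v, Δ.Adj u v → Commute (f u) (f v)) (v : U) :
    lift Δ f hf (gen Δ v) = f v :=
  PresentedGroup.toGroup.of _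

lemma hom_ext {f g : RAAG Δ →* G} (h : ∀ v, f (gen Δ v) = g (gen Δ v)) : f = g :=
  PresentedGroup.ext h

variable {Δ} in
lemma gen_commute {u v : U} (h : Δ.Adj u v) : Commute (gen Δ u) (gen Δ v) := by
  have hrel : PresentedGroup.mk (raagRels Δ)
      (FreeGroup.of u * FreeGroup.of v * (FreeGroup.of u)⁻¹ * (FreeGroup.of v)⁻¹) = 1 :=
    (QuotientGroup.eq_one_iff _).2 (Subgroup.subset_normalClosure ⟨u, v, h, rfl⟩)
  simp only [map_mul, map_inv] at hrel
  rw [← commutatorElement_eq_one_iff_commute, commutatorElement_def]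
  exact hrel

noncomputable def cliqueHom {n : ℕ} (c : Fin n → U) (hc : Pairwise fun i j => Δ.Adj (c i) (c j))
    (k : Fin n → ℤ) : FreeAb n →* RAAG Δ :=
  FreeAb.lift (fun i => gen Δ (c i) ^ k i) fun i j => by
    rcases eq_or_ne i j with rfl | hij
    · exact Commute.refl _
    · exact (gen_commute (hc hij)).zpow_zpow _ _

variable {n : ℕ} {c : Fin n → U} (hc : Pairwise fun i j => Δ.Adj (c i) (c j)) (k : Fin n → ℤ)

@[simp]
lemma cliqueHom_basis (i : Fin n) : cliqueHom Δ c hc k (FreeAb.basis i) = gen Δ (c i) ^ k i :=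
  FreeAb.lift_basis _ _ i

lemma cliqueHom_injective (hk : ∀ i, k i ≠ 0) : Function.Injective (cliqueHom Δ c hc k) := by
  classical
  have hinj : Function.Injective c := fun i j hij => by
    by_contra hne
    exact (hc hne).ne hij
  let r : RAAG Δ →* FreeAb n :=
    lift Δ (fun v => ofAdd fun i => if c i = v then 1 else 0) fun _ _ _ => Commute.all _ _
  have hr : r.comp (cliqueHom Δ c hc k) = FreeAb.scale k := by
    refine FreeAb.hom_ext fun j => ?_
    rw [MonoidHom.comp_apply, cliqueHom_basis, map_zpow, lift_gen, FreeAb.scale_basis]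
    refine congrArg (· ^ k j) (congrArg ofAdd (funext fun i => ?_))
    simp [hinj.eq_iff, Pi.single_apply]
  refine Function.Injective.of_comp (f := r) ?_
  rw [← MonoidHom.coe_comp, hr]
  exact FreeAb.scale_injective hk

lemma cliqueHom_not_surjective (w : U) (hw : ∀ i, c i = w → Even (k i)) :
    ¬ Function.Surjective (cliqueHom Δ c hc k) := by
  classical
  let χ : RAAG Δ →* Multiplicative (ZMod 2) :=
    lift Δ (fun v => ofAdd (if v = w then 1 else 0)) fun _ _ _ => Commute.all _ _
  have hχ : χ.comp (cliqueHom Δ c hc k) = 1 := by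
    refine FreeAb.hom_ext fun i => ?_
    rw [MonoidHom.comp_apply, cliqueHom_basis, map_zpow, lift_gen, MonoidHom.one_apply]
    by_cases hi : c i = w
    · simp [hi, ← ofAdd_zsmul, (ZMod.intCast_eq_zero_iff_even).2 (hw i hi)]
    · simp [hi]
  intro hsurj
  obtain ⟨x, hx⟩ := hsurj (gen Δ w)
  have hχw := DFunLike.congr_fun hχ x
  rw [MonoidHom.comp_apply, hx, lift_gen, if_pos rfl, MonoidHom.one_apply] at hχw
  exact one_ne_zero (ofAdd.injective hχw)

end RAAG

namespace AmalgamatedProduct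

variable {C : Type v} {P Q : Type u} [Group C] [Group P] [Group Q] (φ₁ : C →* P) (φ₂ : C →* Q)

noncomputable def mk : Monoid.Coprod P Q →* AmalgamatedProduct φ₁ φ₂ :=
  QuotientGroup.mk' _

noncomputable def inl : P →* AmalgamatedProduct φ₁ φ₂ := (mk φ₁ φ₂).comp Monoid.Coprod.inl

noncomputable def inr : Q →* AmalgamatedProduct φ₁ φ₂ := (mk φ₁ φ₂).comp Monoid.Coprod.inr

lemma inl_apply_eq_inr_apply (c : C) : inl φ₁ φ₂ (φ₁ c) = inr φ₁ φ₂ (φ₂ c) := by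
  have h : mk φ₁ φ₂ (Monoid.Coprod.inl (φ₁ c) * (Monoid.Coprod.inr (φ₂ c))⁻¹) = 1 :=
    (QuotientGroup.eq_one_iff _).2 (Subgroup.subset_normalClosure (Set.mem_range_self c))
  rwa [map_mul, map_inv, mul_inv_eq_one] at h

variable {φ₁ φ₂} {G : Type*} [Group G]

lemma hom_ext {f g : AmalgamatedProduct φ₁ φ₂ →* G} (hl : f.comp (inl φ₁ φ₂) = g.comp (inl φ₁ φ₂))
    (hr : f.comp (inr φ₁ φ₂) = g.comp (inr φ₁ φ₂)) : f = g :=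
  QuotientGroup.monoidHom_ext _ (Monoid.Coprod.hom_ext hl hr)

noncomputable def lift (p : P →* G) (q : Q →* G) (hpq : p.comp φ₁ = q.comp φ₂) :
    AmalgamatedProduct φ₁ φ₂ →* G :=
  QuotientGroup.lift _ (Monoid.Coprod.lift p q) <| Subgroup.normalClosure_le_normal <| by
    rintro _ ⟨c, rfl⟩
    simpa [mul_inv_eq_one] using DFunLike.congr_fun hpq c

end AmalgamatedProduct

lemma splitsOver_of_leftInverse_lift {C : Type v} {P Q G : Type u} [Group C] [Group P] [Group Q]
    [Group G] {φ₁ : C →* P} {φ₂ : C →* Q} (hinj₁ : Function.Injective φ₁)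
    (hinj₂ : Function.Injective φ₂) (hns₁ : ¬ Function.Surjective φ₁)
    (hns₂ : ¬ Function.Surjective φ₂) (p : P →* G) (q : Q →* G) (hpq : p.comp φ₁ = q.comp φ₂)
    (F : G →* AmalgamatedProduct φ₁ φ₂) (hFp : F.comp p = AmalgamatedProduct.inl φ₁ φ₂)
    (hFq : F.comp q = AmalgamatedProduct.inr φ₁ φ₂)
    (hF : (AmalgamatedProduct.lift p q hpq).comp F = MonoidHom.id G) : SplitsOver G C := by
  refine Or.inl ⟨⟨P, Q, φ₁, φ₂, hinj₁, hinj₂, hns₁, hns₂, F.toMulEquiv _ hF ?_⟩⟩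
  refine AmalgamatedProduct.hom_ext ?_ ?_
  · ext x
    exact DFunLike.congr_fun hFp x
  · ext x
    exact DFunLike.congr_fun hFq x

lemma SimpleGraph.IsClique.pairwise_induce_adj {V : Type*} {Γ : SimpleGraph V} {n : ℕ}
    {C : Finset V} (hC : Γ.IsClique C) (ε : Fin n ≃ C) {S : Set V} (hS : ∀ v ∈ C, v ∈ S) :
    Pairwise fun i j => (Γ.induce S).Adj ⟨ε i, hS _ (ε i).2⟩ ⟨ε j, hS _ (ε j).2⟩ := fun i j hij =>
  hC (ε i).2 (ε j).2 fun h => hij (ε.injective (Subtype.ext h))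

namespace RAAG

open AmalgamatedProduct

variable {V : Type*} (Γ : SimpleGraph V)

def inducePow (S : Set V) (k : V → ℤ) : RAAG (Γ.induce S) →* RAAG Γ :=
  lift _ (fun v => gen Γ v ^ k v) fun _ _ h => (gen_commute (Δ := Γ) h).zpow_zpow _ _

@[simp]
lemma inducePow_gen (S : Set V) (k : V → ℤ) (v : S) :
    inducePow Γ S k (gen _ v) = gen Γ v ^ k v :=
  lift_gen _ _ _ v

section CliqueAmalgam

variable {Γ} {n : ℕ} {C : Finset V} (ε : Fin n ≃ C) (hC : Γ.IsClique C) (Y : Set V)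
  (hCY : ∀ v ∈ C, v ∉ Y) (k : V → ℤ)

noncomputable def leftCliqueHom : FreeAb n →* RAAG (Γ.induce (Y ∪ C)) :=
  cliqueHom _ _ (hC.pairwise_induce_adj ε fun _ => Set.mem_union_right Y) 1

variable {Y}

noncomputable def rightCliqueHom : FreeAb n →* RAAG (Γ.induce Yᶜ) :=
  cliqueHom _ _ (hC.pairwise_induce_adj ε hCY) fun i => k (ε i)

lemma inducePow_comp_leftCliqueHom :
    (inducePow Γ (Y ∪ C) k).comp (leftCliqueHom ε hC Y) =
      (inducePow Γ Yᶜ 1).comp (rightCliqueHom ε hC hCY k) :=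
  FreeAb.hom_ext fun i => by simp [leftCliqueHom, rightCliqueHom]

lemma inl_gen_eq_inr_gen_zpow (u : C) :
    inl (leftCliqueHom ε hC Y) (rightCliqueHom ε hC hCY k) (gen _ ⟨u, Set.mem_union_right Y u.2⟩) =
      inr (leftCliqueHom ε hC Y) (rightCliqueHom ε hC hCY k) (gen _ ⟨u, hCY _ u.2⟩ ^ k u) := by
  obtain ⟨i, rfl⟩ := ε.surjective u
  simpa [leftCliqueHom, rightCliqueHom] using
    inl_apply_eq_inr_apply (leftCliqueHom ε hC Y) (rightCliqueHom ε hC hCY k) (FreeAb.basis i)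

open Classical in
noncomputable def toAmalgamGen (v : V) :
    AmalgamatedProduct (leftCliqueHom ε hC Y) (rightCliqueHom ε hC hCY k) :=
  if hv : v ∈ Y then inl _ _ (gen _ ⟨v, Or.inl hv⟩) else inr _ _ (gen _ ⟨v, hv⟩)

variable {k} {s : Set V}

lemma toAmalgamGen_of_mem (hsC : s ⊆ C) (hk : ∀ v ∈ Y ∪ s, k v = 1) {v : V} (hv : v ∈ Y ∪ s) :
    toAmalgamGen ε hC hCY k v = inl _ _ (gen _ ⟨v, hv.imp_right (hsC ·)⟩) := by
  rcases hv with hv | hv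
  · exact dif_pos hv
  · simpa [toAmalgamGen, hCY v (hsC hv), hk v (Or.inr hv)] using
      (inl_gen_eq_inr_gen_zpow ε hC hCY k ⟨v, hsC hv⟩).symm

lemma toAmalgamGen_commute (hsC : s ⊆ C) (hk : ∀ v ∈ Y ∪ s, k v = 1)
    (hY : ∀ v ∈ Y, ∀ w, Γ.Adj v w → w ∈ Y ∨ w ∈ s) {u v : V}
    (huv : Γ.Adj u v) : Commute (toAmalgamGen ε hC hCY k u) (toAmalgamGen ε hC hCY k v) := by
  by_cases hYuv : u ∈ Y ∨ v ∈ Y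
  · have hu : u ∈ Y ∪ s := hYuv.elim Or.inl fun hv => hY v hv u huv.symm
    have hv : v ∈ Y ∪ s := hYuv.elim (fun hu => hY u hu v huv) Or.inl
    rw [toAmalgamGen_of_mem ε hC hCY hsC hk hu, toAmalgamGen_of_mem ε hC hCY hsC hk hv]
    exact (gen_commute (Δ := Γ.induce (Y ∪ C)) (u := ⟨u, hu.imp_right (hsC ·)⟩)
      (v := ⟨v, hv.imp_right (hsC ·)⟩) huv).map _
  · push Not at hYuv
    simp only [toAmalgamGen, dif_neg hYuv.1, dif_neg hYuv.2]
    exact (gen_commute (Δ := Γ.induce Yᶜ) (u := ⟨u, hYuv.1⟩) (v := ⟨v, hYuv.2⟩) huv).map _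

noncomputable def toAmalgam (hsC : s ⊆ C) (hk : ∀ v ∈ Y ∪ s, k v = 1)
    (hY : ∀ v ∈ Y, ∀ w, Γ.Adj v w → w ∈ Y ∨ w ∈ s) :
    RAAG Γ →* AmalgamatedProduct (leftCliqueHom ε hC Y) (rightCliqueHom ε hC hCY k) :=
  RAAG.lift Γ (toAmalgamGen ε hC hCY k) fun _ _ => toAmalgamGen_commute ε hC hCY hsC hk hY

variable (hsC : s ⊆ C) (hk : ∀ v ∈ Y ∪ s, k v = 1) (hY : ∀ v ∈ Y, ∀ w, Γ.Adj v w → w ∈ Y ∨ w ∈ s)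

lemma toAmalgam_comp_inducePow_union :
    (toAmalgam ε hC hCY hsC hk hY).comp (inducePow Γ (Y ∪ C) k) = inl _ _ := by
  refine hom_ext _ fun ⟨v, hv⟩ => ?_
  rw [MonoidHom.comp_apply, inducePow_gen, map_zpow, toAmalgam, RAAG.lift_gen]
  by_cases hvY : v ∈ Y
  · rw [hk v (Or.inl hvY), zpow_one]
    exact dif_pos hvY
  · simp only [toAmalgamGen, dif_neg hvY]
    rw [← map_zpow]
    exact (inl_gen_eq_inr_gen_zpow ε hC hCY k ⟨v, hv.resolve_left hvY⟩).symm

lemma toAmalgam_comp_inducePow_compl :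
    (toAmalgam ε hC hCY hsC hk hY).comp (inducePow Γ Yᶜ 1) = inr _ _ := by
  refine hom_ext _ fun ⟨v, hv⟩ => ?_
  rw [MonoidHom.comp_apply, inducePow_gen, Pi.one_apply, zpow_one, toAmalgam, RAAG.lift_gen]
  exact dif_neg hv

lemma lift_comp_toAmalgam :
    (AmalgamatedProduct.lift _ _ (inducePow_comp_leftCliqueHom ε hC hCY k)).comp
      (toAmalgam ε hC hCY hsC hk hY) = MonoidHom.id _ := by
  refine hom_ext _ fun v => ?_
  rw [MonoidHom.comp_apply, toAmalgam, RAAG.lift_gen, MonoidHom.id_apply]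
  by_cases hvY : v ∈ Y
  · rw [toAmalgamGen, dif_pos hvY]
    exact (inducePow_gen _ _ _ _).trans (by rw [hk v (Or.inl hvY), zpow_one])
  · rw [toAmalgamGen, dif_neg hvY]
    exact (inducePow_gen _ _ _ _).trans (zpow_one _)

end CliqueAmalgam

end RAAG

open RAAG in
theorem splitsOver_of_separating_subclique {V : Type*} {Γ : SimpleGraph V} {n : ℕ} {C : Finset V}
    (hC : Γ.IsNClique n C) {s : Set V} (hsC : s ⊆ C) {Y : Set V} (hCY : ∀ v ∈ C, v ∉ Y)
    (hY : ∀ v ∈ Y, ∀ w, Γ.Adj v w → w ∈ Y ∨ w ∈ s) {y : V} (hy : y ∈ Y) {w : V} (hwY : w ∉ Y)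
    (hws : w ∉ s) : SplitsOver (RAAG Γ) (FreeAb n) := by
  classical
  let ε : Fin n ≃ C := (Finset.equivFinOfCardEq hC.card_eq).symm
  let k : V → ℤ := fun v => if v ∈ Y ∪ s then 1 else 2
  have hk : ∀ v ∈ Y ∪ s, k v = 1 := fun v hv => if_pos hv
  refine splitsOver_of_leftInverse_lift ?_ ?_ ?_ ?_ _ _ _ _
    (toAmalgam_comp_inducePow_union ε hC.isClique hCY hsC hk hY)
    (toAmalgam_comp_inducePow_compl ε hC.isClique hCY hsC hk hY)
    (lift_comp_toAmalgam ε hC.isClique hCY hsC hk hY)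
  · exact cliqueHom_injective _ _ _ fun _ => one_ne_zero
  · exact cliqueHom_injective _ _ _ fun i => by unfold k; split_ifs <;> norm_num
  · refine cliqueHom_not_surjective _ _ _ ⟨y, Or.inl hy⟩ fun i hi => absurd hy (hCY _ ?_)
    obtain rfl : (ε i : V) = y := congrArg Subtype.val hi
    exact (ε i).2
  · refine cliqueHom_not_surjective _ _ _ ⟨w, hwY⟩ fun i hi => ?_
    obtain rfl : (ε i : V) = w := congrArg Subtype.val hi
    have hk₂ : k (ε i) = 2 := if_neg (by rintro (h | h) <;> contradiction)
    exact hk₂ ▸ even_two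

namespace SeparatesGraph

variable {V : Type*} {Γ : SimpleGraph V} {s : Set V}

lemma exists_unreachable_avoiding_clique (hsep : SeparatesGraph Γ s) {t : Set V}
    (ht : Γ.IsClique t) :
    ∃ a b : {v | v ∉ s}, ¬ (Γ.induce {v | v ∉ s}).Reachable a b ∧
      ∀ m ∈ t, ∀ hms : m ∉ s, ¬ (Γ.induce {v | v ∉ s}).Reachable a ⟨m, hms⟩ := by
  obtain ⟨x, y, hxy⟩ : ∃ x y, ¬ (Γ.induce {v | v ∉ s}).Reachable x y := by
    simpa [SeparatesGraph, SimpleGraph.Preconnected] using hsep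
  by_cases hx : ∃ m ∈ t, ∃ hms : m ∉ s, (Γ.induce {v | v ∉ s}).Reachable ⟨m, hms⟩ x
  · obtain ⟨m, hmt, hms, hmx⟩ := hx
    refine ⟨y, x, fun h => hxy h.symm, fun m' hm't hm's hym' => hxy ?_⟩
    have hm'm : (Γ.induce {v | v ∉ s}).Reachable ⟨m', hm's⟩ ⟨m, hms⟩ := by
      rcases eq_or_ne m' m with rfl | hne
      · rfl
      · exact SimpleGraph.Adj.reachable (ht hm't hmt hne)
    exact (hym'.trans (hm'm.trans hmx)).symm
  · push Not at hx
    exact ⟨x, y, hxy, fun m hmt hms h => hx m hmt hms h.symm⟩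

lemma exists_component_avoiding_clique (hsep : SeparatesGraph Γ s) {t : Set V}
    (ht : Γ.IsClique t) :
    ∃ Y : Set V, (∀ v ∈ t, v ∉ Y) ∧ (∀ v ∈ Y, ∀ w, Γ.Adj v w → w ∈ Y ∨ w ∈ s) ∧
      Y.Nonempty ∧ ∃ w ∉ Y, w ∉ s := by
  obtain ⟨a, b, hab, ha⟩ := hsep.exists_unreachable_avoiding_clique ht
  refine ⟨{v | ∃ hv : v ∉ s, (Γ.induce {v | v ∉ s}).Reachable a ⟨v, hv⟩}, ?_, ?_,
    ⟨a, a.2, .rfl⟩, b, fun ⟨_, h⟩ => hab h, b.2⟩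
  · rintro v hvt ⟨hvs, hav⟩
    exact ha v hvt hvs hav
  · rintro v ⟨hvs, hav⟩ w hvw
    by_cases hws : w ∈ s
    · exact Or.inr hws
    · exact Or.inl ⟨hws, hav.trans (SimpleGraph.Adj.reachable (G := Γ.induce {v | v ∉ s})
        (u := ⟨v, hvs⟩) (v := ⟨w, hws⟩) hvw)⟩

end SeparatesGraph

lemma HNNExtension.commute_t_of_refl {G : Type*} [Group G] (a : G) :
    Commute (t : HNNExtension G ⊤ ⊤ (MulEquiv.refl _)) (of a) :=
  t_mul_of (φ := MulEquiv.refl _) ⟨a, Subgroup.mem_top a⟩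

namespace RAAG

lemma commute_gen_cliqueHom {U : Type*} {Δ : SimpleGraph U} {n : ℕ} {c : Fin n → U}
    (hc : Pairwise fun i j => Δ.Adj (c i) (c j)) (k : Fin n → ℤ) {v : U} (hv : ∀ i, Δ.Adj v (c i))
    (a : FreeAb n) : Commute (gen Δ v) (cliqueHom Δ c hc k a) := by
  have hconj : (MulAut.conj (gen Δ v)).toMonoidHom.comp (cliqueHom Δ c hc k) = cliqueHom Δ c hc k :=
    FreeAb.hom_ext fun i => by
      rw [MonoidHom.comp_apply, cliqueHom_basis, MulEquiv.coe_toMonoidHom, MulAut.conj_apply]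
      exact ((gen_commute (hv i)).zpow_right _).mul_inv_cancel
  exact mul_inv_eq_iff_eq_mul.1 (DFunLike.congr_fun hconj a)

section CompleteGraph

open HNNExtension

variable {V : Type*} {Γ : SimpleGraph V} {n : ℕ} (ι : Fin (n + 1) ≃ V)

def hnnGen (i : Fin (n + 1)) : HNNExtension (FreeAb n) ⊤ ⊤ (MulEquiv.refl _) :=
  Fin.lastCases t (fun i => of (FreeAb.basis i)) i

lemma hnnGen_commute (i j : Fin (n + 1)) : Commute (hnnGen i) (hnnGen j) := by
  induction i using Fin.lastCases <;> induction j using Fin.lastCases <;>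
    simp only [hnnGen, Fin.lastCases_last, Fin.lastCases_castSucc]
  · exact Commute.refl _
  · exact commute_t_of_refl _
  · exact (commute_t_of_refl _).symm
  · exact (Commute.all _ _).map _

noncomputable def toHNN : RAAG Γ →* HNNExtension (FreeAb n) ⊤ ⊤ (MulEquiv.refl _) :=
  lift Γ (fun v => hnnGen (ι.symm v)) fun _ _ _ => hnnGen_commute _ _

lemma toHNN_gen (i : Fin (n + 1)) : toHNN ι (gen Γ (ι i)) = hnnGen i :=
  (lift_gen _ _ _ _).trans (congrArg hnnGen (ι.symm_apply_apply i))

variable (hΓ : IsCompleteGraph Γ)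

noncomputable def ofHNN : HNNExtension (FreeAb n) ⊤ ⊤ (MulEquiv.refl _) →* RAAG Γ :=
  HNNExtension.lift
    (cliqueHom Γ (fun i => ι i.castSucc) (fun _ _ hij => hΓ _ _ (ι.injective.ne
      (Fin.castSucc_injective _ |>.ne hij))) 1)
    (gen Γ (ι (Fin.last n)))
    fun a => commute_gen_cliqueHom _ _
      (fun i => hΓ _ _ (ι.injective.ne (Fin.castSucc_lt_last i).ne')) a

lemma ofHNN_hnnGen (i : Fin (n + 1)) : ofHNN ι hΓ (hnnGen i) = gen Γ (ι i) := by
  induction i using Fin.lastCases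
  · rw [hnnGen, Fin.lastCases_last]
    exact HNNExtension.lift_t _ _ _
  · rw [hnnGen, Fin.lastCases_castSucc]
    exact (HNNExtension.lift_of _ _ _ _).trans ((cliqueHom_basis _ _ _ _).trans (zpow_one _))

lemma ofHNN_comp_toHNN : (ofHNN ι hΓ).comp (toHNN ι) = MonoidHom.id _ :=
  hom_ext _ fun v => by
    obtain ⟨i, rfl⟩ := ι.surjective v
    rw [MonoidHom.comp_apply, toHNN_gen, ofHNN_hnnGen, MonoidHom.id_apply]

lemma toHNN_comp_ofHNN : (toHNN ι).comp (ofHNN ι hΓ) = MonoidHom.id _ := by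
  refine HNNExtension.hom_ext (FreeAb.hom_ext fun i => ?_) ?_
  · have h := congrArg (toHNN ι) (ofHNN_hnnGen ι hΓ i.castSucc)
    rwa [toHNN_gen, hnnGen, Fin.lastCases_castSucc] at h
  · have h := congrArg (toHNN ι) (ofHNN_hnnGen ι hΓ (Fin.last n))
    rwa [toHNN_gen, hnnGen, Fin.lastCases_last] at h

end CompleteGraph

end RAAG

theorem nonempty_hnnSplitting_of_isCompleteGraph {V : Type} [Fintype V] {Γ : SimpleGraph V}
    (hΓ : IsCompleteGraph Γ) {n : ℕ} (hcard : Fintype.card V = n + 1) :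
    Nonempty (HNNSplitting (RAAG Γ) (FreeAb n)) :=
  let ι : Fin (n + 1) ≃ V := (Fintype.equivFinOfCardEq hcard).symm
  ⟨⟨FreeAb n, ⊤, ⊤, MulEquiv.refl _, Subgroup.topEquiv.symm,
    (RAAG.toHNN ι).toMulEquiv (RAAG.ofHNN ι hΓ) (RAAG.ofHNN_comp_toHNN ι hΓ)
      (RAAG.toHNN_comp_ofHNN ι hΓ)⟩⟩

/-- If the finite simple graph `Γ` is a complete graph with `n+1`
vertices, or contains a complete subgraph `Λ` of size `n` together with a subgraph
`Λ₀ ⊆ Λ` whose removal disconnects `Γ`, then `A(Γ)` splits non-trivially over a subgroup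
isomorphic to `ℤ^n`. -/
theorem raag_splits_over_Zn_of_cliqueCutCondition {V : Type} [Fintype V]
    (Γ : SimpleGraph V) (n : ℕ) (h : CliqueCutCondition Γ n) :
    SplitsOver (RAAG Γ) (FreeAb n) := by
  rcases h with ⟨hΓ, hcard⟩ | ⟨t, ht, s, hst, hsep⟩
  · exact Or.inr (nonempty_hnnSplitting_of_isCompleteGraph hΓ hcard)
  · obtain ⟨Y, htY, hY, ⟨y, hy⟩, w, hwY, hws⟩ := hsep.exists_component_avoiding_clique ht.isClique
    exact splitsOver_of_separating_subclique ht hst htY hY hy hwY hws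
end CoarseGraph
end

section
/- Every finite simple graph X admits a complete-cut-decomposition, i.e. there exist a finite tree T and a collection of induced subgraphs (V_s)_{s ∈ V(T)} of X indexed by the vertices of T such that: every edge of X is an edge of some V_s; for every s ∈ V(T), the subgraph V_s has no complete cut; and for all adjacent r, s ∈ V(T), the intersection V_r ∩ V_s is a complete cut of X properly contained in both V_r and V_s. -/
/-! ## Coarse geometry of graphs -/

section CoarseGraph

variable {W : Type*}

/-!
Induction on `|S|`, decomposing the induced subgraph `X[S]` and asking in addition that every
clique of `X[S]` lie in some piece. If `X[S]` has no complete cut it is its own single piece.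
Otherwise take an inclusion-minimal complete cut `e`, let `U` be one component of `X[S \ e]` and
`U'` the union of the others, and decompose `X[e ∪ U]` and `X[e ∪ U']`. A complete cut `c` of
`X[e ∪ U]` is one of `X[S]`: the clique `e \ c` meets at most one component of `X[(e ∪ U) \ c]`,
and a component avoiding `e` is still a component of `X[S \ c]`. Hence, by minimality, no
complete cut of a part lies inside `e`, which forces the piece containing the clique `e` to be
strictly larger than `e`. Joining the two trees by an edge between these two pieces, which meet
exactly in `e`, decomposes `X[S]`; a clique of `X[S]` cannot meet both `U` and `U'`.
-/

open SimpleGraph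

section ConnectedWithin

variable {V : Type*} {X : SimpleGraph V} {A B e : Set V} {x y : V}

lemma ConnectedWithin.symm (h : ConnectedWithin X A x y) : ConnectedWithin X A y x := by
  induction h with
  | refl => exact .refl
  | tail _ hbc ih => exact ih.head ⟨hbc.2.1, hbc.1, hbc.2.2.symm⟩

lemma ConnectedWithin.mono (hAB : A ⊆ B) (h : ConnectedWithin X A x y) :
    ConnectedWithin X B x y :=
  Relation.ReflTransGen.mono (fun _ _ h => ⟨hAB h.1, hAB h.2.1, h.2.2⟩) _ _ h

lemma ConnectedWithin.mem_of_closed {K : Set V} (hK : ∀ u ∈ K, ∀ v ∈ A, X.Adj u v → v ∈ K)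
    (hx : x ∈ K) (h : ConnectedWithin X A x y) : y ∈ K := by
  induction h with
  | refl => exact hx
  | tail _ hbc ih => exact hK _ ih _ hbc.2.1 hbc.2.2

lemma ConnectedWithin.mem (hx : x ∈ A) (h : ConnectedWithin X A x y) : y ∈ A :=
  h.mem_of_closed (fun _ _ _ hv _ => hv) hx

lemma SimpleGraph.IsClique.connectedWithin (he : X.IsClique e) (hx : x ∈ e ∩ A)
    (hy : y ∈ e ∩ A) : ConnectedWithin X A x y := by
  rcases eq_or_ne x y with rfl | hxy
  · exact .refl
  · exact .single ⟨hx.2, hy.2, he hx.1 hy.1 hxy⟩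

lemma SimpleGraph.reachable_induce_iff {x y : A} :
    (X.induce A).Reachable x y ↔ ConnectedWithin X A x y := by
  rw [reachable_iff_reflTransGen]
  refine ⟨Relation.ReflTransGen.lift Subtype.val (fun a b h => ⟨a.2, b.2, h⟩) x y, fun h => ?_⟩
  suffices ∀ v, ConnectedWithin X A x v → ∀ hv : v ∈ A,
      Relation.ReflTransGen (X.induce A).Adj x ⟨v, hv⟩ from this y h y.2
  intro v hv
  induction hv with
  | refl => exact fun _ => .refl
  | tail _ hbc ih => exact fun _ => (ih hbc.1).tail hbc.2.2

end ConnectedWithin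

lemma SimpleGraph.IsTree.sum_sup_edge {W₁ W₂ : Type*} [Finite W₁] [Finite W₂]
    {T₁ : SimpleGraph W₁} {T₂ : SimpleGraph W₂} (h₁ : T₁.IsTree) (h₂ : T₂.IsTree) (r₁ : W₁)
    (r₂ : W₂) : ((T₁ ⊕g T₂) ⊔ edge (Sum.inl r₁) (Sum.inr r₂)).IsTree := by
  rw [isTree_iff_connected_and_card] at h₁ h₂ ⊢
  refine ⟨h₁.1.sum_sup_edge h₂.1, ?_⟩
  have hnew : s(Sum.inl r₁, Sum.inr r₂) ∉ (T₁ ⊕g T₂).edgeSet :=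
    not_adj_sum_inl_inr (G := T₁) (H := T₂) r₁ r₂
  rw [edgeSet_sup, edgeSet_edge_of_ne Sum.inl_ne_inr, Set.union_singleton, Nat.card_coe_set_eq,
    Set.ncard_insert_of_notMem hnew, ← Nat.card_coe_set_eq,
    Nat.card_congr edgeSetSumEquiv, Nat.card_sum, Nat.card_sum]
  omega

namespace CompleteCutDecomposition

variable {V : Type*} {X : SimpleGraph V} {S U e c : Set V}

variable (X) in
def SeparatesWithin (S c : Set V) : Prop :=
  ∃ x ∈ S \ c, ∃ y ∈ S \ c, ¬ ConnectedWithin X (S \ c) x y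

variable (X) in
def IsCompleteCutIn (S c : Set V) : Prop :=
  X.IsClique c ∧ c ⊆ S ∧ SeparatesWithin X S c

lemma completeCut_of_isCompleteCutIn_univ (h : IsCompleteCutIn X Set.univ c) :
    CompleteCut X c := by
  obtain ⟨hc, -, x, hx, y, hy, hxy⟩ := h
  refine ⟨hc, fun hconn => hxy ?_⟩
  exact (reachable_induce_iff.1 (hconn ⟨x, hx.2⟩ ⟨y, hy.2⟩)).mono fun v hv => ⟨trivial, hv⟩

lemma isCompleteCutIn_of_completeCut_induce {c : Set S} (h : CompleteCut (X.induce S) c) :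
    IsCompleteCutIn X S (Subtype.val '' c) := by
  obtain ⟨hc, hsep⟩ := h
  refine ⟨isClique_induce_iff.1 hc, Subtype.coe_image_subset S c, ?_⟩
  by_contra hnsep
  refine hsep fun x y => by_contra fun hxy => hnsep ?_
  let φ : X.induce (S \ Subtype.val '' c) →g (X.induce S).induce {v | v ∉ c} :=
    ⟨fun v => ⟨⟨v.1, v.2.1⟩, fun h => v.2.2 ⟨_, h, rfl⟩⟩, id⟩
  have hx : x.1.1 ∈ S \ Subtype.val '' c := ⟨x.1.2, fun ⟨_, h, hv⟩ => x.2 (Subtype.ext hv ▸ h)⟩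
  have hy : y.1.1 ∈ S \ Subtype.val '' c := ⟨y.1.2, fun ⟨_, h, hv⟩ => y.2 (Subtype.ext hv ▸ h)⟩
  exact ⟨_, hx, _, hy, fun h =>
    hxy ((reachable_induce_iff (x := ⟨_, hx⟩) (y := ⟨_, hy⟩)).2 h |>.map φ)⟩

variable (X) in
/-- `U` is a union of connected components of the subgraph induced on `A`. -/
def IsAdjClosed (A U : Set V) : Prop :=
  U ⊆ A ∧ ∀ u ∈ U, ∀ v ∈ A, X.Adj u v → v ∈ U

lemma isAdjClosed_connectedWithin (A : Set V) (a : V) :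
    IsAdjClosed X A {w ∈ A | ConnectedWithin X A a w} :=
  ⟨fun _ h => h.1, fun _ hu _ hv huv => ⟨hv, hu.2.tail ⟨hu.1, hv, huv⟩⟩⟩

lemma IsAdjClosed.diff {A : Set V} (hU : IsAdjClosed X A U) : IsAdjClosed X A (A \ U) :=
  ⟨Set.sdiff_subset, fun u hu v hv huv => ⟨hv, fun hvU => hu.2 (hU.2 v hvU u hu.1 huv.symm)⟩⟩
lemma IsAdjClosed.union_subset (hU : IsAdjClosed X (S \ e) U) (heS : e ⊆ S) : e ∪ U ⊆ S :=
  Set.union_subset heS (hU.1.trans Set.sdiff_subset)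

lemma IsAdjClosed.isCompleteCutIn_of_union (hU : IsAdjClosed X (S \ e) U)
    (he : X.IsClique e) (heS : e ⊆ S) (hc : IsCompleteCutIn X (e ∪ U) c) :
    IsCompleteCutIn X S c := by
  obtain ⟨hcc, hcP, x, hx, y, hy, hxy⟩ := hc
  have hPS := hU.union_subset heS
  refine ⟨hcc, hcP.trans hPS, ?_⟩
  have separates_of_avoids : ∀ x y, x ∈ (e ∪ U) \ c → y ∈ (e ∪ U) \ c →
      ¬ ConnectedWithin X ((e ∪ U) \ c) x y →
      (∀ w, ConnectedWithin X ((e ∪ U) \ c) x w → w ∉ e) → SeparatesWithin X S c := by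
    intro x y hx hy hxy havoid
    refine ⟨x, ⟨hPS hx.1, hx.2⟩, y, ⟨hPS hy.1, hy.2⟩, fun h => hxy (h.mem_of_closed ?_ .refl)⟩
    intro u (hu : ConnectedWithin X _ x u) v hv huv
    have hvP : v ∈ e ∪ U := by
      by_cases hve : v ∈ e
      · exact Or.inl hve
      · have huU : u ∈ U := (hu.mem hx).1.resolve_left (havoid u hu)
        exact Or.inr (hU.2 u huU v ⟨hv.1, hve⟩ huv)
    exact hu.tail ⟨hu.mem hx, ⟨hvP, hv.2⟩, huv⟩
  by_cases hxe : ∃ w ∈ e, ConnectedWithin X ((e ∪ U) \ c) x w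
  · obtain ⟨w, hwe, hxw⟩ := hxe
    refine separates_of_avoids y x hy hx (fun h => hxy h.symm) fun w' hyw' hw'e => hxy ?_
    exact (hxw.trans (he.connectedWithin ⟨hwe, hxw.mem hx⟩ ⟨hw'e, hyw'.mem hy⟩)).trans hyw'.symm
  · push Not at hxe
    exact separates_of_avoids x y hx hy hxy fun w hxw hwe => hxe w hwe hxw

lemma IsAdjClosed.subset_or_subset_of_isClique (hU : IsAdjClosed X (S \ e) U)
    (hc : X.IsClique c) (hcS : c ⊆ S) : c ⊆ e ∪ U ∨ c ⊆ e ∪ ((S \ e) \ U) := by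
  by_cases hcU : ∃ u ∈ c, u ∈ U
  · obtain ⟨u, huc, huU⟩ := hcU
    refine Or.inl fun v hv => or_iff_not_imp_left.2 fun hve => ?_
    rcases eq_or_ne u v with rfl | huv
    · exact huU
    · exact hU.2 u huU v ⟨hcS hv, hve⟩ (hc huc hv huv)
  · exact Or.inr fun v hv =>
      or_iff_not_imp_left.2 fun hve => ⟨⟨hcS hv, hve⟩, fun hvU => hcU ⟨v, hv, hvU⟩⟩

variable (X) in
structure IsDecomposition (S : Set V) {ι : Type} (T : SimpleGraph ι) (Vs : ι → Set V) :
    Prop where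
  isTree : T.IsTree
  subset : ∀ s, Vs s ⊆ S
  noCompleteCut : ∀ s, ¬ ∃ c : Set (Vs s), CompleteCut (X.induce (Vs s)) c
  adj : ∀ r s, T.Adj r s →
    IsCompleteCutIn X S (Vs r ∩ Vs s) ∧ Vs r ∩ Vs s ⊂ Vs r ∧ Vs r ∩ Vs s ⊂ Vs s
  exists_clique_subset : ∀ c, X.IsClique c → c ⊆ S → ∃ s, c ⊆ Vs s

lemma isDecomposition_unit (h : ¬ ∃ c, IsCompleteCutIn X S c) :
    IsDecomposition X S (⊥ : SimpleGraph Unit) fun _ => S where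
  isTree := .of_subsingleton
  subset _ := subset_rfl
  noCompleteCut _ := fun ⟨_, hc⟩ => h ⟨_, isCompleteCutIn_of_completeCut_induce hc⟩
  adj _ _ h := h.elim
  exists_clique_subset _ _ hc := ⟨(), hc⟩

/-- A piece equal to `e` would either meet a neighbouring piece in a complete cut inside `e`, or
be the only piece and then contain `u`. -/
lemma IsDecomposition.exists_ssuperset {P : Set V} {ι : Type} {T : SimpleGraph ι}
    {Vs : ι → Set V} (D : IsDecomposition X P T Vs) (he : X.IsClique e) (heP : e ⊆ P)
    {u : V} (hu : u ∈ P \ e) (hmin : ∀ c, IsCompleteCutIn X P c → ¬ c ⊂ e) :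
    ∃ s, e ⊂ Vs s := by
  obtain ⟨s, hs⟩ := D.exists_clique_subset e he heP
  rcases hs.ssubset_or_eq with hs | rfl
  · exact ⟨s, hs⟩
  by_cases hnbr : ∃ t, T.Adj s t
  · obtain ⟨t, hst⟩ := hnbr
    obtain ⟨hcut, hlt, -⟩ := D.adj s t hst
    exact absurd hlt (hmin _ hcut)
  · have honly : ∀ t, t = s := fun t => by
      obtain ⟨p⟩ := D.isTree.connected.preconnected s t
      cases p with
      | nil => rfl
      | cons hst _ => exact absurd ⟨_, hst⟩ hnbr
    obtain ⟨t, ht⟩ := D.exists_clique_subset {u} (isClique_singleton u)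
      (Set.singleton_subset_iff.2 hu.1)
    exact absurd (honly t ▸ ht rfl) hu.2

lemma IsDecomposition.join {P₁ P₂ : Set V} {ι₁ ι₂ : Type} [Finite ι₁] [Finite ι₂]
    {T₁ : SimpleGraph ι₁} {T₂ : SimpleGraph ι₂} {Vs₁ : ι₁ → Set V} {Vs₂ : ι₂ → Set V}
    (D₁ : IsDecomposition X P₁ T₁ Vs₁) (D₂ : IsDecomposition X P₂ T₂ Vs₂) (h₁S : P₁ ⊆ S)
    (h₂S : P₂ ⊆ S) (hcut₁ : ∀ c, IsCompleteCutIn X P₁ c → IsCompleteCutIn X S c)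
    (hcut₂ : ∀ c, IsCompleteCutIn X P₂ c → IsCompleteCutIn X S c)
    (hclique : ∀ c, X.IsClique c → c ⊆ S → c ⊆ P₁ ∨ c ⊆ P₂) {r₁ : ι₁} {r₂ : ι₂}
    (hcut : IsCompleteCutIn X S (Vs₁ r₁ ∩ Vs₂ r₂)) (hr₁ : Vs₁ r₁ ∩ Vs₂ r₂ ⊂ Vs₁ r₁)
    (hr₂ : Vs₁ r₁ ∩ Vs₂ r₂ ⊂ Vs₂ r₂) :
    IsDecomposition X S ((T₁ ⊕g T₂) ⊔ edge (Sum.inl r₁) (Sum.inr r₂)) (Sum.elim Vs₁ Vs₂) where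
  isTree := D₁.isTree.sum_sup_edge D₂.isTree r₁ r₂
  subset
    | .inl s => (D₁.subset s).trans h₁S
    | .inr s => (D₂.subset s).trans h₂S
  noCompleteCut
    | .inl s => D₁.noCompleteCut s
    | .inr s => D₂.noCompleteCut s
  adj := by
    rintro (r | r) (s | s) hrs <;>
      simp only [sup_adj, sum_adj, edge_adj, Sum.inl.injEq, Sum.inr.injEq, reduceCtorEq, ne_eq,
        and_false, false_and, and_self, and_true, or_self, or_false, false_or,
        not_false_eq_true] at hrs
    · exact (D₁.adj r s hrs).imp_left (hcut₁ _)
    · obtain ⟨rfl, rfl⟩ := hrs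
      exact ⟨hcut, hr₁, hr₂⟩
    · obtain ⟨rfl, rfl⟩ := hrs
      rw [Sum.elim_inl, Sum.elim_inr, Set.inter_comm]
      exact ⟨hcut, hr₂, hr₁⟩
    · exact (D₂.adj r s hrs).imp_left (hcut₂ _)
  exists_clique_subset c hc hcS := by
    rcases hclique c hc hcS with hc₁ | hc₂
    · obtain ⟨s, hs⟩ := D₁.exists_clique_subset c hc hc₁
      exact ⟨.inl s, hs⟩
    · obtain ⟨s, hs⟩ := D₂.exists_clique_subset c hc hc₂
      exact ⟨.inr s, hs⟩

lemma IsDecomposition.glue_of_minimal {ι₁ ι₂ : Type} [Finite ι₁] [Finite ι₂]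
    {T₁ : SimpleGraph ι₁} {T₂ : SimpleGraph ι₂} {Vs₁ : ι₁ → Set V} {Vs₂ : ι₂ → Set V}
    (D₁ : IsDecomposition X (e ∪ U) T₁ Vs₁) (D₂ : IsDecomposition X (e ∪ ((S \ e) \ U)) T₂ Vs₂)
    (he : Minimal (IsCompleteCutIn X S) e) (hU : IsAdjClosed X (S \ e) U) {a b : V}
    (ha : a ∈ U) (hb : b ∈ (S \ e) \ U) :
    ∃ (T : SimpleGraph (ι₁ ⊕ ι₂)) (Vs : ι₁ ⊕ ι₂ → Set V), IsDecomposition X S T Vs := by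
  obtain ⟨hec, heS, -⟩ := he.1
  have hU' := hU.diff
  have hmin : ∀ W, IsAdjClosed X (S \ e) W → ∀ c, IsCompleteCutIn X (e ∪ W) c → ¬ c ⊂ e :=
    fun W hW c hc hce => he.not_prop_of_lt hce (hW.isCompleteCutIn_of_union hec heS hc)
  obtain ⟨r₁, hr₁⟩ := D₁.exists_ssuperset hec Set.subset_union_left
    ⟨Or.inr ha, (hU.1 ha).2⟩ (hmin U hU)
  obtain ⟨r₂, hr₂⟩ := D₂.exists_ssuperset hec Set.subset_union_left
    ⟨Or.inr hb, hb.1.2⟩ (hmin _ hU')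
  have hinter : Vs₁ r₁ ∩ Vs₂ r₂ = e := by
    refine subset_antisymm (fun v ⟨hv₁, hv₂⟩ => ?_) (Set.subset_inter hr₁.1 hr₂.1)
    rcases D₁.subset r₁ hv₁ with hve | hvU
    · exact hve
    · exact (D₂.subset r₂ hv₂).resolve_right fun h => h.2 hvU
  rw [← hinter] at hr₁ hr₂
  exact ⟨_, _, D₁.join D₂ (hU.union_subset heS) (hU'.union_subset heS)
    (fun _ => hU.isCompleteCutIn_of_union hec heS) (fun _ => hU'.isCompleteCutIn_of_union hec heS)
    (fun _ => hU.subset_or_subset_of_isClique) (hinter ▸ he.1) hr₁ hr₂⟩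

theorem exists_isDecomposition [Finite V] (X : SimpleGraph V) (S : Set V) :
    ∃ (ι : Type) (_ : Fintype ι) (T : SimpleGraph ι) (Vs : ι → Set V),
      IsDecomposition X S T Vs := by
  induction hn : S.ncard using Nat.strong_induction_on generalizing S with
  | _ n ih =>
  by_cases hcut : ∃ c, IsCompleteCutIn X S c
  · obtain ⟨e, he⟩ := exists_minimal_of_wellFoundedLT _ hcut
    obtain ⟨-, heS, a, ha, b, hb, hab⟩ := he.1
    set U := {w ∈ S \ e | ConnectedWithin X (S \ e) a w}
    have hU : IsAdjClosed X (S \ e) U := isAdjClosed_connectedWithin _ a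
    have haU : a ∈ U := ⟨ha, .refl⟩
    have hbU : b ∈ (S \ e) \ U := ⟨hb, fun h => hab h.2⟩
    have hlt : ∀ W, IsAdjClosed X (S \ e) W → ∀ v ∈ S \ e, v ∉ W → (e ∪ W).ncard < n :=
      fun W hW v hv hvW => hn ▸ Set.ncard_lt_ncard
        ((Set.ssubset_iff_of_subset (hW.union_subset heS)).2 ⟨v, hv.1, fun h => h.elim hv.2 hvW⟩)
    obtain ⟨ι₁, _, T₁, Vs₁, D₁⟩ := ih _ (hlt U hU b hb hbU.2) _ rfl
    obtain ⟨ι₂, _, T₂, Vs₂, D₂⟩ := ih _ (hlt _ hU.diff a ha fun h => h.2 haU) _ rfl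
    obtain ⟨T, Vs, D⟩ := D₁.glue_of_minimal D₂ he hU haU hbU
    exact ⟨ι₁ ⊕ ι₂, inferInstance, T, Vs, D⟩
  · exact ⟨Unit, inferInstance, ⊥, _, isDecomposition_unit hcut⟩

end CompleteCutDecomposition

/-- Every finite simple graph admits a complete-cut-decomposition:
there are a finite tree `T` and induced subgraphs `(V_s)` of `X` indexed by the vertices
of `T` such that every edge of `X` lies in some `V_s`, no `V_s` has a complete cut, and
for adjacent `r, s` the intersection `V_r ∩ V_s` is a complete cut of `X` properly
contained in both `V_r` and `V_s`. -/
theorem exists_complete_cut_decomposition {V : Type} [Fintype V] (X : SimpleGraph V) :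
    ∃ (ι : Type) (_ : Fintype ι) (T : SimpleGraph ι) (Vs : ι → Set V),
      T.IsTree ∧
      (∀ u v : V, X.Adj u v → ∃ s : ι, u ∈ Vs s ∧ v ∈ Vs s) ∧
      (∀ s : ι, ¬ ∃ c : Set (Vs s), CompleteCut (X.induce (Vs s)) c) ∧
      (∀ r s : ι, T.Adj r s →
        CompleteCut X (Vs r ∩ Vs s) ∧ Vs r ∩ Vs s ⊂ Vs r ∧ Vs r ∩ Vs s ⊂ Vs s) := by
  obtain ⟨ι, _, T, Vs, D⟩ := CompleteCutDecomposition.exists_isDecomposition X Set.univ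
  refine ⟨ι, inferInstance, T, Vs, D.isTree, fun u v huv => ?_, D.noCompleteCut, fun r s hrs => ?_⟩
  · obtain ⟨s, hs⟩ := D.exists_clique_subset {u, v} (isClique_pair.2 fun _ => huv)
      (Set.subset_univ _)
    exact ⟨s, hs (by simp), hs (by simp)⟩
  · obtain ⟨hcut, hlt⟩ := D.adj r s hrs
    exact ⟨CompleteCutDecomposition.completeCut_of_isCompleteCutIn_univ hcut, hlt⟩
end CoarseGraph
end

section
/- Let n ≥ 1 be an integer. A subgroup H of ℤ^n (equipped with a word metric from a finite generating set) is coarsely separating if and only if H has rank n−1. -/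
/-! ## Coarse geometry of graphs -/

section CoarseGraph

variable {W : Type*}

/-!
By the Smith normal form there is a basis of `ℤ^n` and a set `J` of coordinates such that `H` is a
finite-index subgroup of the span of the basis vectors outside `J`; thus `H` has rank `n - |J|`.
Each coordinate is Lipschitz for the word metric, and the distance to `H` is bounded by a multiple
of the `ℓ¹`-norm of the `J`-coordinates plus a constant. If `J = ∅`, `H` is coarsely dense. If
`J = {j₀}`, the `j₀`-coordinate cannot change sign along a path avoiding a large neighbourhood of
`H`, while both half-lines in direction `b j₀` go arbitrarily far from `H`. If `|J| ≥ 2`, every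
point far from `H` has some large `J`-coordinate; holding it large, move another `J`-coordinate to a
large value, then hold that one and move all the others: every deep component reaches the same
point.
-/

open Multiplicative

section WordMetric

variable {G : Type*} [Group G] {S : Set G}

lemma wordDist_le_length {l : List G} (hl : ∀ s ∈ l, s ∈ S ∨ s⁻¹ ∈ S) (x : G) :
    wordDist S x (x * l.prod) ≤ l.length :=
  sInf_le ⟨l, hl, rfl, rfl⟩

lemma exists_word_of_wordDist_le {x y : G} {k : ℕ} (h : wordDist S x y ≤ k) :
    ∃ l : List G, (∀ s ∈ l, s ∈ S ∨ s⁻¹ ∈ S) ∧ y = x * l.prod ∧ l.length ≤ k := by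
  have hlt : wordDist S x y < (k + 1 : ℕ) := h.trans_lt (by exact_mod_cast k.lt_succ_self)
  obtain ⟨_, ⟨l, hl, hy, rfl⟩, hlen⟩ := sInf_lt_iff.1 hlt
  exact ⟨l, hl, hy, Nat.lt_succ_iff.1 (by exact_mod_cast hlen)⟩

lemma wordDist_self (x : G) : wordDist S x x = 0 :=
  nonpos_iff_eq_zero.1 (by simpa using wordDist_le_length (S := S) (l := []) (by simp) x)

lemma wordDist_mul_left (a x y : G) : wordDist S (a * x) (a * y) = wordDist S x y := by
  unfold wordDist
  congr 1
  ext m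
  simp only [Set.mem_ofPred_eq, mul_assoc, mul_right_inj]

lemma wordDist_comm (x y : G) : wordDist S x y = wordDist S y x := by
  suffices h : ∀ x y : G, wordDist S y x ≤ wordDist S x y from le_antisymm (h y x) (h x y)
  intro x y
  refine le_sInf ?_
  rintro _ ⟨l, hl, rfl, rfl⟩
  have hinv : ∀ s ∈ (l.map (·⁻¹)).reverse, s ∈ S ∨ s⁻¹ ∈ S := by
    simp only [List.mem_reverse, List.mem_map]
    rintro _ ⟨s, hs, rfl⟩
    rw [inv_inv]
    exact (hl s hs).symm
  simpa [← List.prod_inv_reverse] using wordDist_le_length hinv (x * l.prod)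

lemma wordDist_triangle (x y z : G) :
    wordDist S x z ≤ wordDist S x y + wordDist S y z := by
  induction hxy : wordDist S x y using ENat.recTopCoe with
  | top => simp
  | coe k₁ =>
  induction hyz : wordDist S y z using ENat.recTopCoe with
  | top => simp
  | coe k₂ =>
  obtain ⟨l₁, hl₁, rfl, hlen₁⟩ := exists_word_of_wordDist_le hxy.le
  obtain ⟨l₂, hl₂, rfl, hlen₂⟩ := exists_word_of_wordDist_le hyz.le
  have hl : ∀ s ∈ l₁ ++ l₂, s ∈ S ∨ s⁻¹ ∈ S := by
    simp only [List.mem_append]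
    rintro s (hs | hs)
    exacts [hl₁ s hs, hl₂ s hs]
  calc wordDist S x (x * l₁.prod * l₂.prod) ≤ (l₁ ++ l₂).length := by
        simpa [mul_assoc] using wordDist_le_length hl x
    _ ≤ k₁ + k₂ := by simp only [List.length_append]; exact_mod_cast add_le_add hlen₁ hlen₂

lemma wordDist_eq_wordDist_one (x y : G) : wordDist S x y = wordDist S 1 (x⁻¹ * y) := by
  rw [← wordDist_mul_left x⁻¹, inv_mul_cancel]

lemma wordDist_one_mul_le (x y : G) :
    wordDist S 1 (x * y) ≤ wordDist S 1 x + wordDist S 1 y := by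
  simpa [wordDist_eq_wordDist_one x] using wordDist_triangle (S := S) 1 x (x * y)

lemma wordDist_one_inv (x : G) : wordDist S 1 x⁻¹ = wordDist S 1 x := by
  rw [← wordDist_mul_left x, mul_one, mul_inv_cancel, wordDist_comm]

lemma wordDist_one_pow_le (g : G) (m : ℕ) : wordDist S 1 (g ^ m) ≤ m * wordDist S 1 g := by
  induction m with
  | zero => simp [wordDist_self]
  | succ m ih =>
    calc wordDist S 1 (g ^ (m + 1)) ≤ wordDist S 1 (g ^ m) + wordDist S 1 g := by
          rw [pow_succ]; exact wordDist_one_mul_le _ _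
      _ ≤ m * wordDist S 1 g + wordDist S 1 g := by gcongr
      _ = (m + 1 : ℕ) * wordDist S 1 g := by push_cast; ring

lemma wordDist_one_zpow_le (g : G) (t : ℤ) :
    wordDist S 1 (g ^ t) ≤ t.natAbs * wordDist S 1 g := by
  obtain ⟨m, rfl | rfl⟩ := Int.eq_nat_or_neg t
  · simpa using wordDist_one_pow_le g m
  · simpa [wordDist_one_inv] using wordDist_one_pow_le g m

lemma exists_wordDist_one_le_of_finite {ι : Type*} [Finite ι] (hS : Subgroup.closure S = ⊤)
    (g : ι → G) : ∃ w : ℕ, ∀ i, wordDist S 1 (g i) ≤ w := by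
  have hfin : ∀ i, wordDist S 1 (g i) ≠ ⊤ := by
    intro i
    have hg : g i ∈ (Subgroup.closure S).toSubmonoid := by simp [hS]
    rw [Subgroup.closure_toSubmonoid] at hg
    obtain ⟨l, hl, hprod⟩ := Submonoid.exists_list_of_mem_closure hg
    rw [← hprod]
    refine ne_top_of_le_ne_top (ENat.natCast_ne_top l.length) ?_
    simpa using wordDist_le_length (fun s hs => (hl s hs).imp id Set.mem_inv.1) 1
  obtain ⟨w, hw⟩ := Finite.exists_le fun i => (wordDist S 1 (g i)).toNat
  exact ⟨w, fun i => (ENat.natCast_toNat (hfin i)).symm.trans_le (by exact_mod_cast hw i)⟩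

lemma WordStep.wordDist_le_one {x y : G} (h : WordStep S x y) : wordDist S x y ≤ 1 := by
  obtain ⟨s, hs, rfl⟩ := h
  simpa using wordDist_le_length (S := S) (l := [s]) (by simpa using hs) x

lemma setWordDist_le_wordDist {A : Set G} {a : G} (ha : a ∈ A) (x : G) :
    setWordDist S A x ≤ wordDist S a x :=
  iInf₂_le a ha

lemma exists_wordDist_le_of_setWordDist_le {A : Set G} {x : G} {k : ℕ}
    (h : setWordDist S A x ≤ k) : ∃ a ∈ A, wordDist S a x ≤ k := by
  have hlt : setWordDist S A x < (k + 1 : ℕ) := h.trans_lt (by exact_mod_cast k.lt_succ_self)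
  simp only [setWordDist, iInf_lt_iff, exists_prop] at hlt
  obtain ⟨a, ha, hax⟩ := hlt
  exact ⟨a, ha, Order.le_of_lt_add_one (by exact_mod_cast hax)⟩

lemma ConnectedInCayley.symm {K : Set G} {x y : G} (h : ConnectedInCayley S K x y) :
    ConnectedInCayley S K y x := by
  induction h with
  | refl => exact .refl
  | tail _ hstep ih =>
    obtain ⟨ha, hb, s, hs, rfl⟩ := hstep
    exact ih.head ⟨hb, ha, s⁻¹, by rwa [inv_inv, or_comm], by group⟩

lemma connectedInCayley_of_ball_subset {K : Set G} {x y : G} {k : ℕ}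
    (hxy : wordDist S x y ≤ k) (hK : ∀ z, wordDist S x z ≤ k → z ∈ K) :
    ConnectedInCayley S K x y := by
  obtain ⟨l, hl, rfl, hlen⟩ := exists_word_of_wordDist_le hxy
  replace hK : ∀ z, wordDist S x z ≤ l.length → z ∈ K :=
    fun z hz => hK z (hz.trans (by exact_mod_cast hlen))
  clear hxy hlen
  induction l generalizing x with
  | nil => rw [List.prod_nil, mul_one]; exact .refl
  | cons s t ih =>
    have hs : s ∈ S ∨ s⁻¹ ∈ S := hl s List.mem_cons_self
    have hxs : wordDist S x (x * s) ≤ 1 := WordStep.wordDist_le_one ⟨s, hs, rfl⟩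
    have hstep : x ∈ K ∧ x * s ∈ K ∧ WordStep S x (x * s) :=
      ⟨hK x (by simp [wordDist_self]), hK _ (hxs.trans (by simp)), s, hs, rfl⟩
    have htail := ih (x := x * s) (fun s' hs' => hl s' (List.mem_cons_of_mem s hs')) fun z hz =>
      hK z ((wordDist_triangle x (x * s) z).trans (by simpa [add_comm] using add_le_add hxs hz))
    rw [List.prod_cons, ← mul_assoc]
    exact htail.head hstep

lemma connectedInCayley_mul_pow {K : Set G} {x g : G} {k : ℕ} (hg : wordDist S 1 g ≤ k)
    (m : ℕ) (hK : ∀ i < m, ∀ z, wordDist S (x * g ^ i) z ≤ k → z ∈ K) :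
    ConnectedInCayley S K x (x * g ^ m) := by
  induction m with
  | zero => rw [pow_zero, mul_one]; exact .refl
  | succ m ih =>
    refine (ih fun i hi => hK i (by omega)).trans
      (connectedInCayley_of_ball_subset ?_ (hK m m.lt_succ_self))
    rwa [wordDist_eq_wordDist_one, pow_succ, ← mul_assoc x, inv_mul_cancel_left]

lemma connectedInCayley_mul_zpow {K : Set G} {x g : G} {k : ℕ} (hg : wordDist S 1 g ≤ k)
    (m : ℤ) (hK : ∀ t ∈ Set.uIcc 0 m, ∀ z, wordDist S (x * g ^ t) z ≤ k → z ∈ K) :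
    ConnectedInCayley S K x (x * g ^ m) := by
  obtain ⟨m, rfl | rfl⟩ := Int.eq_nat_or_neg m
  · simpa using connectedInCayley_mul_pow hg m fun i hi =>
      by simpa using hK i (Set.mem_uIcc.2 (by omega))
  · have hg' : wordDist S 1 g⁻¹ ≤ k := by rwa [wordDist_one_inv]
    simpa using connectedInCayley_mul_pow hg' m fun i hi =>
      by simpa using hK (-i) (Set.mem_uIcc.2 (by omega))

end WordMetric

lemma wordDist_one_prod_le {G ι : Type*} [CommGroup G] {S : Set G} (s : Finset ι) (f : ι → G) :
    wordDist S 1 (∏ i ∈ s, f i) ≤ ∑ i ∈ s, wordDist S 1 (f i) := by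
  induction s using Finset.cons_induction with
  | empty => simp [wordDist_self]
  | cons i s hi ih =>
    rw [Finset.prod_cons, Finset.sum_cons]
    exact (wordDist_one_mul_le _ _).trans (by gcongr)

section Coordinates

variable {n : ℕ} (b : Module.Basis (Fin n) ℤ (Fin n → ℤ))

noncomputable def coord (x : FreeAb n) : Fin n → ℤ := b.equivFun x.toAdd

lemma coord_ofAdd (v : Fin n → ℤ) : coord b (ofAdd v) = b.equivFun v := rfl

lemma coord_mul (x y : FreeAb n) : coord b (x * y) = coord b x + coord b y :=
  map_add b.equivFun _ _

lemma coord_inv (x : FreeAb n) : coord b x⁻¹ = -coord b x :=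
  map_neg b.equivFun _

lemma coord_injective : Function.Injective (coord b) :=
  b.equivFun.injective.comp toAdd.injective

lemma coord_ofAdd_basis_zpow (j : Fin n) (t : ℤ) :
    coord b (ofAdd (b j) ^ t) = Pi.single j t := by
  ext i
  rw [← ofAdd_zsmul, coord_ofAdd, map_zsmul, Pi.smul_apply, Module.Basis.equivFun_self]
  simp [Pi.single_apply, eq_comm]

lemma coord_mul_basis_zpow (x : FreeAb n) (j : Fin n) (t : ℤ) :
    coord b (x * ofAdd (b j) ^ t) = coord b x + Pi.single j t := by
  rw [coord_mul, coord_ofAdd_basis_zpow]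

variable {b} {S : Set (FreeAb n)}

lemma exists_natAbs_coord_le (hS : S.Finite) :
    ∃ c : ℕ, ∀ s ∈ S, ∀ j, (coord b s j).natAbs ≤ c := by
  obtain ⟨c, hc⟩ := ((hS.prod (Set.finite_univ (α := Fin n))).image
    fun p => (coord b p.1 p.2).natAbs).bddAbove
  exact ⟨c, fun s hs j => hc ⟨(s, j), ⟨hs, trivial⟩, rfl⟩⟩

lemma natAbs_coord_sub_le {c : ℕ} (hc : ∀ s ∈ S, ∀ j, (coord b s j).natAbs ≤ c)
    {x y : FreeAb n} {k : ℕ} (h : wordDist S x y ≤ k) (j : Fin n) :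
    (coord b y j - coord b x j).natAbs ≤ c * k := by
  obtain ⟨l, hl, rfl, hlen⟩ := exists_word_of_wordDist_le h
  suffices (coord b l.prod j).natAbs ≤ c * l.length by
    simpa [coord_mul] using this.trans (Nat.mul_le_mul_left c hlen)
  clear hlen h
  induction l with
  | nil => simp [coord]
  | cons s t ih =>
    have hs : (coord b s j).natAbs ≤ c := by
      rcases hl s List.mem_cons_self with hs | hs
      · exact hc s hs j
      · simpa [coord_inv] using hc s⁻¹ hs j
    have ht := ih fun s' hs' => hl s' (List.mem_cons_of_mem s hs')
    rw [List.prod_cons, coord_mul, Pi.add_apply, List.length_cons]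
    calc (coord b s j + coord b t.prod j).natAbs
        ≤ (coord b s j).natAbs + (coord b t.prod j).natAbs := Int.natAbs_add_le _ _
      _ ≤ c + c * t.length := add_le_add hs ht
      _ = c * (t.length + 1) := by ring

lemma wordDist_one_le_sum_natAbs_coord {w : ℕ} (hw : ∀ j, wordDist S 1 (ofAdd (b j)) ≤ w)
    (x : FreeAb n) : wordDist S 1 x ≤ (w * ∑ j, (coord b x j).natAbs : ℕ) := by
  have hx : x = ∏ j, ofAdd (b j) ^ coord b x j := by
    rw [← toAdd.injective.eq_iff, toAdd_prod]
    simpa [coord] using (b.sum_equivFun x.toAdd).symm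
  calc wordDist S 1 x = wordDist S 1 (∏ j, ofAdd (b j) ^ coord b x j) := congrArg _ hx
    _ ≤ ∑ j, wordDist S 1 (ofAdd (b j) ^ coord b x j) := wordDist_one_prod_le _ _
    _ ≤ ∑ j, ((coord b x j).natAbs : ℕ∞) * w :=
      Finset.sum_le_sum fun j _ => (wordDist_one_zpow_le _ _).trans (by gcongr; exact hw j)
    _ = (w * ∑ j, (coord b x j).natAbs : ℕ) := by
      push_cast
      rw [Finset.mul_sum]
      simp only [mul_comm]

end Coordinates

structure IsCoordinateLattice {n : ℕ} (b : Module.Basis (Fin n) ℤ (Fin n → ℤ))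
    (J : Finset (Fin n)) (H : Subgroup (FreeAb n)) : Prop where
  coord_eq_zero : ∀ x ∈ H, ∀ j ∈ J, coord b x j = 0
  exists_near : ∃ A : ℕ, ∀ x, ∃ h ∈ H, ∀ j ∉ J, (coord b x j - coord b h j).natAbs ≤ A

section CoordinateLattice

variable {n : ℕ} {b : Module.Basis (Fin n) ℤ (Fin n → ℤ)} {J : Finset (Fin n)}
  {H : Subgroup (FreeAb n)} {S : Set (FreeAb n)} {c w : ℕ}

lemma natAbs_coord_le_of_setWordDist_le (hH : ∀ x ∈ H, ∀ j ∈ J, coord b x j = 0)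
    (hc : ∀ s ∈ S, ∀ j, (coord b s j).natAbs ≤ c) {x : FreeAb n} {L : ℕ}
    (hx : setWordDist S H x ≤ L) {j : Fin n} (hj : j ∈ J) :
    (coord b x j).natAbs ≤ c * L := by
  obtain ⟨h, hh, hhx⟩ := exists_wordDist_le_of_setWordDist_le hx
  simpa [hH h hh j hj] using natAbs_coord_sub_le hc hhx j

lemma notMem_wordNbhd_of_wordDist_le (hH : ∀ x ∈ H, ∀ j ∈ J, coord b x j = 0)
    (hc : ∀ s ∈ S, ∀ j, (coord b s j).natAbs ≤ c) {L k : ℕ} {x z : FreeAb n} {j : Fin n}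
    (hj : j ∈ J) (hx : c * (L + k) < (coord b x j).natAbs) (hz : wordDist S x z ≤ k) :
    z ∉ wordNbhd S H L := fun hzL => by
  have h₁ := natAbs_coord_le_of_setWordDist_le hH hc hzL hj
  have h₂ := natAbs_coord_sub_le hc hz j
  rw [mul_add] at hx
  omega

lemma IsCoordinateLattice.exists_setWordDist_le (hH : IsCoordinateLattice b J H)
    (hw : ∀ j, wordDist S 1 (ofAdd (b j)) ≤ w) :
    ∃ R : ℕ, ∀ x, setWordDist S H x ≤ (w * ∑ j ∈ J, (coord b x j).natAbs + R : ℕ) := by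
  obtain ⟨A, hA⟩ := hH.exists_near
  refine ⟨w * (n * A), fun x => ?_⟩
  obtain ⟨h, hh, hhx⟩ := hA x
  have hcoord : ∀ j, coord b (h⁻¹ * x) j = coord b x j - coord b h j := by
    intro j
    simp only [coord_mul, coord_inv, Pi.add_apply, Pi.neg_apply]
    ring
  have hsum : ∑ j, (coord b (h⁻¹ * x) j).natAbs ≤ ∑ j ∈ J, (coord b x j).natAbs + n * A := by
    rw [← Finset.sum_add_sum_compl J]
    gcongr with j hj
    · rw [hcoord, hH.coord_eq_zero h hh j hj, sub_zero]
    · calc ∑ j ∈ Jᶜ, (coord b (h⁻¹ * x) j).natAbs ≤ Jᶜ.card * A :=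
            Finset.sum_le_card_nsmul _ _ _ fun j hj => by
              rw [hcoord]; exact hhx j (Finset.mem_compl.1 hj)
        _ ≤ n * A := by gcongr; simpa using Finset.card_le_univ Jᶜ
  calc setWordDist S H x ≤ wordDist S h x := setWordDist_le_wordDist hh x
    _ = wordDist S 1 (h⁻¹ * x) := wordDist_eq_wordDist_one h x
    _ ≤ (w * ∑ j, (coord b (h⁻¹ * x) j).natAbs : ℕ) := wordDist_one_le_sum_natAbs_coord hw _
    _ ≤ _ := by gcongr; rw [← mul_add]; exact Nat.mul_le_mul_left w hsum

end CoordinateLattice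

section Separation

variable {n : ℕ} {b : Module.Basis (Fin n) ℤ (Fin n → ℤ)} {J : Finset (Fin n)}
  {H : Subgroup (FreeAb n)} {S : Set (FreeAb n)} {c w L : ℕ}

lemma connectedInCayley_mul_basis_zpow (hH : ∀ x ∈ H, ∀ j ∈ J, coord b x j = 0)
    (hc : ∀ s ∈ S, ∀ j, (coord b s j).natAbs ≤ c) (hw : ∀ j, wordDist S 1 (ofAdd (b j)) ≤ w)
    {x : FreeAb n} {jw : Fin n} (hjw : jw ∈ J) (j : Fin n) (m : ℤ)
    (hfar : ∀ t ∈ Set.uIcc 0 m,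
      c * (L + w) < (coord b x jw + (Pi.single j t : Fin n → ℤ) jw).natAbs) :
    ConnectedInCayley S (wordNbhd S H L)ᶜ x (x * ofAdd (b j) ^ m) :=
  connectedInCayley_mul_zpow (hw j) m fun t ht _ hz =>
    notMem_wordNbhd_of_wordDist_le hH hc hjw (by simpa [coord_mul_basis_zpow] using hfar t ht) hz

lemma connectedInCayley_of_coord_eq_off (hH : ∀ x ∈ H, ∀ j ∈ J, coord b x j = 0)
    (hc : ∀ s ∈ S, ∀ j, (coord b s j).natAbs ≤ c) (hw : ∀ j, wordDist S 1 (ofAdd (b j)) ≤ w)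
    {jw : Fin n} (hjw : jw ∈ J) {F : Finset (Fin n)} (hF : jw ∉ F) {x y : FreeAb n}
    (hx : c * (L + w) < (coord b x jw).natAbs) (hxy : ∀ j ∉ F, coord b x j = coord b y j) :
    ConnectedInCayley S (wordNbhd S H L)ᶜ x y := by
  induction F using Finset.induction_on generalizing x with
  | empty =>
    obtain rfl : x = y := coord_injective b (funext fun j => hxy j (Finset.notMem_empty j))
    exact .refl
  | insert j F hjF ih =>
    have hjjw : jw ≠ j := fun h => hF (h ▸ Finset.mem_insert_self j F)
    have hjw_off : ∀ t : ℤ, (Pi.single j t : Fin n → ℤ) jw = 0 := fun t => Pi.single_eq_of_ne hjjw _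
    refine (connectedInCayley_mul_basis_zpow hH hc hw hjw j (coord b y j - coord b x j)
      fun t _ => by rwa [hjw_off, add_zero]).trans (ih (fun h => hF (Finset.mem_insert_of_mem h))
      (by rwa [coord_mul_basis_zpow, Pi.add_apply, hjw_off, add_zero]) fun i hi => ?_)
    rw [coord_mul_basis_zpow, Pi.add_apply]
    by_cases hij : i = j
    · subst hij
      simp
    · rw [Pi.single_eq_of_ne hij, add_zero, hxy i (by simp [hij, hi])]

lemma connectedInCayley_const (hH : ∀ x ∈ H, ∀ j ∈ J, coord b x j = 0)
    (hc : ∀ s ∈ S, ∀ j, (coord b s j).natAbs ≤ c) (hw : ∀ j, wordDist S 1 (ofAdd (b j)) ≤ w)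
    {j₁ j₂ : Fin n} (hj₁ : j₁ ∈ J) (hj₂ : j₂ ∈ J) (hne : j₁ ≠ j₂) {x : FreeAb n} {jx : Fin n}
    (hjx : jx ∈ J) (hx : c * (L + w) < (coord b x jx).natAbs) :
    ConnectedInCayley S (wordNbhd S H L)ᶜ x
      (ofAdd (b.equivFun.symm fun _ => ((c * (L + w) + 1 : ℕ) : ℤ))) := by
  set M : ℤ := ((c * (L + w) + 1 : ℕ) : ℤ)
  have hz : coord b (ofAdd (b.equivFun.symm fun _ => M)) = fun _ => M :=
    b.equivFun.apply_symm_apply _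
  obtain ⟨jw, hjw, hjwx⟩ : ∃ jw ∈ J, jw ≠ jx := by
    by_cases h : j₁ = jx
    · exact ⟨j₂, hj₂, h ▸ hne.symm⟩
    · exact ⟨j₁, hj₁, h⟩
  have hx₁ : coord b (x * ofAdd (b jw) ^ (M - coord b x jw)) jw = M := by
    simp [coord_mul_basis_zpow]
  refine (connectedInCayley_of_coord_eq_off hH hc hw hjx (F := {jw}) (by simpa using hjwx.symm)
    hx fun j hj => ?_).trans (connectedInCayley_of_coord_eq_off hH hc hw hjw
    (F := Finset.univ.erase jw) (by simp) (by rw [hx₁]; omega) fun j hj => ?_)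
  · rw [coord_mul_basis_zpow, Pi.add_apply, Pi.single_eq_of_ne (by simpa using hj), add_zero]
  · rw [hz, (by simpa using hj : j = jw), hx₁]

lemma pos_coord_iff_of_connectedInCayley (hc : ∀ s ∈ S, ∀ j, (coord b s j).natAbs ≤ c)
    {K : Set (FreeAb n)} {j : Fin n} (hK : ∀ p ∈ K, c < (coord b p j).natAbs) {x y : FreeAb n}
    (h : ConnectedInCayley S K x y) : 0 < coord b x j ↔ 0 < coord b y j := by
  induction h with
  | refl => rfl
  | tail _ hstep ih =>
    obtain ⟨hp, hq, hpq⟩ := hstep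
    have hstep := natAbs_coord_sub_le hc (k := 1) (by exact_mod_cast hpq.wordDist_le_one) j
    have := hK _ hp
    have := hK _ hq
    rw [ih]
    omega

theorem not_coarselySeparates_of_isCoordinateLattice_empty (hS : Subgroup.closure S = ⊤)
    (hH : IsCoordinateLattice b ∅ H) : ¬ CoarselySeparates S H := by
  obtain ⟨w, hw⟩ := exists_wordDist_one_le_of_finite hS fun j => ofAdd (b j)
  obtain ⟨R, hR⟩ := hH.exists_setWordDist_le hw
  rintro ⟨L, x, -, -, -, -, hx, -⟩
  obtain ⟨y, -, hy⟩ := hx R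
  exact hy.not_ge (by simpa using hR y)

theorem coarselySeparates_of_isCoordinateLattice_singleton (hS : IsFinGenSet S) {j₀ : Fin n}
    (hH : IsCoordinateLattice b {j₀} H) : CoarselySeparates S H := by
  obtain ⟨c, hc⟩ := exists_natAbs_coord_le (b := b) hS.1
  obtain ⟨w, hw⟩ := exists_wordDist_one_le_of_finite hS.2 fun j => ofAdd (b j)
  obtain ⟨R, hR⟩ := hH.exists_setWordDist_le hw
  set L := w * c + R
  set T := c * (L + w) + 1 with hT
  set g : FreeAb n := ofAdd (b j₀)
  have hcoord : ∀ t, coord b (g ^ t) j₀ = t := by simp [g, coord_ofAdd_basis_zpow]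
  have hnear : ∀ {t : ℤ} {k : ℕ}, setWordDist S H (g ^ t) ≤ k → t.natAbs ≤ c * k := fun hk => by
    simpa [hcoord] using natAbs_coord_le_of_setWordDist_le hH.coord_eq_zero hc hk
      (Finset.mem_singleton_self j₀)
  -- a single Cayley step changes the `j₀`-coordinate by at most `c`, so it cannot change sign
  have hK : ∀ p ∈ (wordNbhd S H L)ᶜ, c < (coord b p j₀).natAbs := fun p hp => by
    by_contra! hle
    refine hp ((hR p).trans (Nat.cast_le.2 ?_))
    rw [Finset.sum_singleton]
    exact Nat.add_le_add_right (Nat.mul_le_mul_left w hle) R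
  have hdeep : ∀ ε : ℤ, ε.natAbs = 1 → DeepComponent S H (wordNbhd S H L)ᶜ (g ^ (ε * T)) := by
    intro ε hε D
    refine ⟨g ^ (ε * T) * g ^ (ε * ((c * D + 1 : ℕ) : ℤ)), connectedInCayley_mul_basis_zpow
      hH.coord_eq_zero hc hw (Finset.mem_singleton_self j₀) j₀ _ fun t ht => ?_, ?_⟩
    · rw [hcoord, Pi.single_eq_same]
      rcases Int.natAbs_eq_iff.1 hε with rfl | rfl <;> simp only [Set.mem_uIcc] at ht <;> omega
    · rw [← zpow_add, lt_iff_not_ge]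
      intro hle
      have := hnear hle
      rcases Int.natAbs_eq_iff.1 hε with rfl | rfl <;> omega
  have hTL : c * L < T := Nat.lt_succ_of_le (Nat.mul_le_mul_left c (Nat.le_add_right L w))
  refine ⟨L, g ^ (-1 * (T : ℤ)), g ^ (1 * (T : ℤ)), fun h => ?_, fun h => ?_, fun hconn => ?_,
    hdeep (-1) rfl, hdeep 1 rfl⟩
  · have := hnear h; omega
  · have := hnear h; omega
  · have := pos_coord_iff_of_connectedInCayley hc hK hconn
    rw [hcoord, hcoord] at this
    omega

theorem not_coarselySeparates_of_isCoordinateLattice_two_le_card (hS : IsFinGenSet S)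
    (hH : IsCoordinateLattice b J H) (hJ : 2 ≤ J.card) : ¬ CoarselySeparates S H := by
  obtain ⟨c, hc⟩ := exists_natAbs_coord_le (b := b) hS.1
  obtain ⟨w, hw⟩ := exists_wordDist_one_le_of_finite hS.2 fun j => ofAdd (b j)
  obtain ⟨R, hR⟩ := hH.exists_setWordDist_le hw
  obtain ⟨j₁, hj₁, j₂, hj₂, hne⟩ := Finset.one_lt_card.1 hJ
  rintro ⟨L, x, y, -, -, hxy, hx, hy⟩
  have hconn : ∀ x, DeepComponent S H (wordNbhd S H L)ᶜ x → ConnectedInCayley S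
      (wordNbhd S H L)ᶜ x (ofAdd (b.equivFun.symm fun _ => ((c * (L + w) + 1 : ℕ) : ℤ))) := by
    intro x hx
    obtain ⟨x', hxx', hx'⟩ := hx (w * (J.card * (c * (L + w))) + R)
    obtain ⟨j, hj, hbig⟩ : ∃ j ∈ J, c * (L + w) < (coord b x' j).natAbs := by
      by_contra! hsmall
      refine hx'.not_ge ((hR x').trans ?_)
      gcongr
      simpa using Finset.sum_le_card_nsmul J _ _ hsmall
    exact hxx'.trans (connectedInCayley_const hH.coord_eq_zero hc hw hj₁ hj₂ hne hj hbig)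
  exact hxy ((hconn x hx).trans (hconn y hy).symm)

end Separation

lemma FreeAb.eq_of_mulEquiv {m k : ℕ} (e : FreeAb m ≃* FreeAb k) : m = k := by
  let e' : (Fin m → ℤ) ≃+ (Fin k → ℤ) := MulEquiv.toAdditive e
  simpa using e'.toIntLinearEquiv.finrank_eq

def Subgroup.mulEquivToAddSubgroup' {A : Type*} [AddGroup A] (H : Subgroup (Multiplicative A)) :
    H ≃* Multiplicative (Subgroup.toAddSubgroup' H) where
  toFun x := ofAdd ⟨x.1.toAdd, x.2⟩
  invFun v := ⟨ofAdd v.toAdd.1, v.toAdd.2⟩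
  left_inv _ := rfl
  right_inv _ := rfl
  map_mul' _ _ := rfl

theorem exists_isCoordinateLattice {n : ℕ} (H : Subgroup (FreeAb n)) :
    ∃ (b : Module.Basis (Fin n) ℤ (Fin n → ℤ)) (J : Finset (Fin n)),
      IsCoordinateLattice b J H ∧ Nonempty (H ≃* FreeAb (n - J.card)) := by
  obtain ⟨r, snf⟩ := (Subgroup.toAddSubgroup' H).toIntSubmodule.smithNormalForm
    (Pi.basisFun ℤ (Fin n))
  have ha : ∀ i, snf.a i ≠ 0 := fun i ha => snf.bN.ne_zero i <| Subtype.ext <| by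
    rw [snf.snf i, ha, zero_smul, ZeroMemClass.coe_zero]
  have hcard : n - (Finset.univ.map snf.f)ᶜ.card = r := by
    have := Fintype.card_le_of_embedding snf.f
    simp only [Finset.card_compl, Finset.card_map, Finset.card_univ, Fintype.card_fin] at this ⊢
    omega
  refine ⟨snf.bM, (Finset.univ.map snf.f)ᶜ, ⟨fun x hx j hj => ?_, ?_⟩, ?_⟩
  · exact snf.repr_eq_zero_of_notMem_range ⟨x.toAdd, hx⟩ (by simpa using hj)
  · refine ⟨Finset.univ.sup fun i => (snf.a i).natAbs, fun x => ?_⟩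
    let q : Fin r → ℤ := fun i => coord snf.bM x (snf.f i) / snf.a i
    let h : Subgroup.toAddSubgroup' H := snf.bN.equivFun.symm q
    refine ⟨ofAdd h.1, h.2, fun j hj => ?_⟩
    obtain ⟨i, rfl⟩ : j ∈ Set.range snf.f := by simpa using hj
    have hhi : coord snf.bM (ofAdd h.1) (snf.f i) = snf.a i * q i := by
      have := congrFun (snf.repr_comp_embedding_eq_smul h) i
      simp only [Function.comp_apply, smul_eq_mul, h,
        ← Module.Basis.equivFun_apply, LinearEquiv.apply_symm_apply] at this
      exact this
    rw [hhi, ← Int.emod_def]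
    have := Int.emod_lt (coord snf.bM x (snf.f i)) (ha i)
    have := Int.emod_nonneg (coord snf.bM x (snf.f i)) (ha i)
    have := Finset.le_sup (f := fun i => (snf.a i).natAbs) (Finset.mem_univ i)
    omega
  · rw [hcard]
    exact ⟨H.mulEquivToAddSubgroup'.trans (AddEquiv.toMultiplicative snf.bN.equivFun.toAddEquiv)⟩

/-- For `n ≥ 1`, a subgroup `H` of `ℤ^n` (with a word metric coming
from a finite generating set) is coarsely separating if and only if `H` has rank
`n - 1`. -/
theorem subgroup_of_Zn_coarselySeparates_iff_rank {n : ℕ} (hn : 1 ≤ n)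
    (H : Subgroup (FreeAb n)) (S : Set (FreeAb n)) (hS : IsFinGenSet S) :
    CoarselySeparates S (H : Set (FreeAb n)) ↔ Nonempty (H ≃* FreeAb (n - 1)) := by
  obtain ⟨b, J, hH, ⟨e⟩⟩ := exists_isCoordinateLattice H
  have hJ : J.card ≤ n := by simpa using J.card_le_univ
  have hrank : Nonempty (H ≃* FreeAb (n - 1)) ↔ J.card = 1 :=
    ⟨fun ⟨e'⟩ => by have := FreeAb.eq_of_mulEquiv (e.symm.trans e'); omega,
      fun h => ⟨h ▸ e⟩⟩
  rw [hrank]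
  obtain h | h | h : J.card = 0 ∨ J.card = 1 ∨ 2 ≤ J.card := by omega
  · rw [Finset.card_eq_zero] at h
    subst h
    exact iff_of_false (not_coarselySeparates_of_isCoordinateLattice_empty hS.2 hH) (by simp)
  · obtain ⟨j₀, rfl⟩ := Finset.card_eq_one.1 h
    exact iff_of_true (coarselySeparates_of_isCoordinateLattice_singleton hS hH) rfl
  · exact iff_of_false (not_coarselySeparates_of_isCoordinateLattice_two_le_card hS hH h)
      (by omega)
end CoarseGraph
end

section
/- Let n ≥ 1 be an integer and H ≤ ℤ^n a subgroup of rank n−1. Then H is coarsely separating in ℤ^n: some metric neighbourhood of H (with respect to a word metric on ℤ^n) has at least two connected components containing points arbitrarily far away from H. -/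
/-! ## Coarse geometry of graphs -/

section CoarseGraph

variable {W : Type*}

/-! The subgroup `H` has finite index in the kernel of a surjection `φ : ℤ^n → ℤ` (read off a
Smith normal form). Each slab `|φ| ≤ C` is then a finite union of translates of `H`, so it lies
in a bounded neighbourhood of `H`. If `C` bounds `|φ|` on the generators, a path of the Cayley
graph avoiding that neighbourhood cannot pass from `φ > C` to `φ < -C`; and since `|φ| ≤ C · d`
at word distance `d` from `H`, the powers `z ^ m` and `z ^ (-m)` of an element with `φ z = 1`
run off to infinity in the two sides.
-/

open Module Pointwise

section WordMetric

variable {G : Type*} [Group G] {S : Set G}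

theorem exists_list_prod_eq_of_closure_eq_top (hS : Subgroup.closure S = ⊤) (g : G) :
    ∃ l : List G, (∀ s ∈ l, s ∈ S ∨ s⁻¹ ∈ S) ∧ l.prod = g := by
  have hg : g ∈ (Subgroup.closure S).toSubmonoid := by simp [hS]
  rw [Subgroup.closure_toSubmonoid] at hg
  simpa using Submonoid.exists_list_of_mem_closure hg

theorem wordDist_mul_prod_le (a : G) {l : List G} (hl : ∀ s ∈ l, s ∈ S ∨ s⁻¹ ∈ S) :
    wordDist S a (a * l.prod) ≤ l.length :=
  sInf_le ⟨l, hl, rfl, rfl⟩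

theorem exists_mul_subset_wordNbhd (hS : Subgroup.closure S = ⊤) (A : Set G) {T : Set G}
    (hT : T.Finite) : ∃ L : ℕ, A * T ⊆ wordNbhd S A L := by
  choose w hw using exists_list_prod_eq_of_closure_eq_top hS
  obtain ⟨L, hL⟩ := (hT.image fun t => (w t).length).bddAbove
  refine ⟨L, ?_⟩
  rintro _ ⟨a, ha, t, ht, rfl⟩
  calc setWordDist S A (a * t) ≤ wordDist S a (a * (w t).prod) := by
        rw [(hw t).2]; exact biInf_le _ ha
    _ ≤ (w t).length := wordDist_mul_prod_le a (hw t).1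
    _ ≤ L := by exact_mod_cast hL ⟨t, ht, rfl⟩

theorem connectedInCayley_mul_prod {K : Set G} {l : List G} (hl : ∀ s ∈ l, s ∈ S ∨ s⁻¹ ∈ S)
    {x : G} (hK : ∀ k ≤ l.length, x * (l.take k).prod ∈ K) :
    ConnectedInCayley S K x (x * l.prod) := by
  induction l generalizing x with
  | nil => rw [List.prod_nil, mul_one]; exact .refl
  | cons s l ih =>
    have hstep : ConnectedInCayley S K x (x * s) :=
      .single ⟨by simpa using hK 0, by simpa using hK 1, s, hl s (by simp), rfl⟩
    have hrest := ih (fun t ht => hl t (by simp [ht])) (x := x * s) fun k hk => by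
      simpa [mul_assoc] using hK (k + 1) (by simpa using hk)
    rw [List.prod_cons, ← mul_assoc]
    exact hstep.trans hrest

end WordMetric

section Height

variable {G : Type*} [Group G] {S : Set G} {H : Subgroup G} {φ : G →* Multiplicative ℤ} {C L : ℕ}

theorem abs_toAdd_le_of_mem_or_inv_mem (hC : ∀ s ∈ S, |(φ s).toAdd| ≤ C) {s : G}
    (hs : s ∈ S ∨ s⁻¹ ∈ S) : |(φ s).toAdd| ≤ C := by
  rcases hs with hs | hs
  · exact hC s hs
  · simpa using hC s⁻¹ hs

theorem abs_toAdd_list_prod_le (hC : ∀ s ∈ S, |(φ s).toAdd| ≤ C) {l : List G}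
    (hl : ∀ s ∈ l, s ∈ S ∨ s⁻¹ ∈ S) : |(φ l.prod).toAdd| ≤ C * l.length := by
  induction l with
  | nil => simp
  | cons s l ih =>
    have hs := abs_toAdd_le_of_mem_or_inv_mem hC (hl s (by simp))
    have hl' := ih fun t ht => hl t (by simp [ht])
    calc |(φ (s :: l).prod).toAdd| ≤ |(φ s).toAdd| + |(φ l.prod).toAdd| := by
          simpa using abs_add_le _ _
      _ ≤ C * (s :: l).length := by push_cast [List.length_cons]; linarith

theorem lt_setWordDist_of_mul_lt_abs (hC : ∀ s ∈ S, |(φ s).toAdd| ≤ C) (hH : H ≤ φ.ker)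
    {x : G} {D : ℕ} (h : C * D < |(φ x).toAdd|) : (D : ℕ∞) < setWordDist S H x := by
  refine (ENat.add_one_le_iff (ENat.natCast_ne_top D)).mp (le_iInf₂ fun a ha => le_sInf ?_)
  rintro _ ⟨l, hl, rfl, rfl⟩
  have hφa : φ a = 1 := hH ha
  have hlen : (C * D : ℤ) < C * l.length := by
    simp only [map_mul, hφa, one_mul] at h
    exact h.trans_le (abs_toAdd_list_prod_le hC hl)
  exact_mod_cast Nat.lt_of_mul_lt_mul_left (a := C) (by exact_mod_cast hlen)

theorem notMem_wordNbhd_of_mul_lt_abs (hC : ∀ s ∈ S, |(φ s).toAdd| ≤ C) (hH : H ≤ φ.ker)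
    {x : G} (h : C * L < |(φ x).toAdd|) : x ∉ wordNbhd S H L :=
  not_le.mpr (lt_setWordDist_of_mul_lt_abs hC hH h)

theorem lt_toAdd_of_connectedInCayley (hC : ∀ s ∈ S, |(φ s).toAdd| ≤ C) {K : Set G}
    (hK : ∀ w ∈ K, C < |(φ w).toAdd|) {x y : G} (hxy : ConnectedInCayley S K x y)
    (hx : C < (φ x).toAdd) : C < (φ y).toAdd := by
  induction hxy with
  | refl => exact hx
  | tail _ hbc ih =>
    obtain ⟨-, hc, s, hs, rfl⟩ := hbc
    have hs := abs_le.mp (abs_toAdd_le_of_mem_or_inv_mem hC hs)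
    have hc := lt_abs.mp (hK _ hc)
    simp only [map_mul, toAdd_mul] at hc ⊢
    omega

theorem exists_deepComponent_pow (hS : Subgroup.closure S = ⊤)
    (hC : ∀ s ∈ S, |(φ s).toAdd| ≤ C) (hH : H ≤ φ.ker) {z : G} (hz : φ z ≠ 1) :
    ∃ M : ℕ, ∀ m ≥ M, z ^ m ∈ (wordNbhd S H L)ᶜ ∧
      DeepComponent S H (wordNbhd S H L)ᶜ (z ^ m) := by
  obtain ⟨l, hl, rfl⟩ := exists_list_prod_eq_of_closure_eq_top hS z
  have hz' : 1 ≤ |(φ l.prod).toAdd| := Int.one_le_abs (by simpa using hz)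
  have hpow : ∀ k : ℕ, (k : ℤ) ≤ |(φ (l.prod ^ k)).toAdd| := fun k => by
    simp only [map_pow, toAdd_pow, nsmul_eq_mul, abs_mul, Nat.abs_cast]
    nlinarith
  have hfar : ∀ k ≥ C * L + C * l.length + 1, ∀ j ≤ l.length,
      l.prod ^ k * (l.take j).prod ∈ (wordNbhd S H L)ᶜ := by
    intro k hk j _
    refine notMem_wordNbhd_of_mul_lt_abs hC hH ?_
    have hj : |(φ (l.take j).prod).toAdd| ≤ C * l.length :=
      (abs_toAdd_list_prod_le hC fun s hs => hl s (List.mem_of_mem_take hs)).trans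
        (by gcongr; simp)
    have hk' : (C * L + C * l.length + 1 : ℤ) ≤ k := by exact_mod_cast hk
    calc (C * L : ℤ) < k - C * l.length := by linarith
      _ ≤ |(φ (l.prod ^ k)).toAdd| - |(φ (l.take j).prod).toAdd| := sub_le_sub (hpow k) hj
      _ ≤ |(φ (l.prod ^ k * (l.take j).prod)).toAdd| := by
        rw [map_mul, toAdd_mul]; exact abs_sub_abs_le_abs_add _ _
  have hconn : ∀ k ≥ C * L + C * l.length + 1, ∀ k' ≥ k,
      ConnectedInCayley S (wordNbhd S H L)ᶜ (l.prod ^ k) (l.prod ^ k') := by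
    intro k hk k' hk'
    induction k', hk' using Nat.le_induction with
    | base => exact .refl
    | succ k' hkk' ih =>
      rw [pow_succ]
      exact ih.trans (connectedInCayley_mul_prod hl (hfar k' (hk.trans hkk')))
  refine ⟨C * L + C * l.length + 1, fun m hm => ⟨by simpa using hfar m hm 0, fun D => ?_⟩⟩
  refine ⟨l.prod ^ max m (C * D + 1), hconn m hm _ (le_max_left _ _),
    lt_setWordDist_of_mul_lt_abs hC hH ((hpow _).trans_lt' ?_)⟩
  have : C * D + 1 ≤ max m (C * D + 1) := le_max_right _ _
  exact_mod_cast this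

end Height

section CoarseSeparation

variable {G : Type*} [Group G] {H : Subgroup G} {φ : G →* Multiplicative ℤ}

theorem exists_finite_subset_mul_of_isFiniteRelIndex (hφ : Function.Surjective φ)
    [H.IsFiniteRelIndex φ.ker] (C : ℕ) :
    ∃ T : Set G, T.Finite ∧ {w | |(φ w).toAdd| ≤ C} ⊆ (H : Set G) * T := by
  obtain ⟨z, hz⟩ := hφ (.ofAdd 1)
  refine ⟨Set.image2 (fun (q : φ.ker ⧸ H.subgroupOf φ.ker) (c : ℤ) => (q.out : G)⁻¹ * z ^ c)
    Set.univ (Set.Icc (-C : ℤ) C), Set.finite_univ.image2 _ (Set.finite_Icc _ _), ?_⟩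
  intro w hw
  set c := (φ w).toAdd
  have hk : w * z ^ (-c) ∈ φ.ker := by
    rw [MonoidHom.mem_ker]
    apply Multiplicative.toAdd.injective
    simp [hz, c]
  set k : φ.ker := ⟨_, hk⟩
  obtain ⟨h, hh⟩ := QuotientGroup.mk_out_eq_mul (H.subgroupOf φ.ker) k⁻¹
  refine ⟨(h : φ.ker), Subgroup.mem_subgroupOf.mp h.2, _,
    ⟨QuotientGroup.mk k⁻¹, trivial, c, abs_le.mp hw, rfl⟩, ?_⟩
  simp only [hh, Subgroup.coe_mul, Subgroup.coe_inv, k]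
  group

theorem coarselySeparates_of_le_ker {S : Set G} (hS : IsFinGenSet S) (hφ : Function.Surjective φ)
    (hH : H ≤ φ.ker) [H.IsFiniteRelIndex φ.ker] : CoarselySeparates S (H : Set G) := by
  obtain ⟨C, hC⟩ := (hS.1.image fun s => (φ s).toAdd.natAbs).bddAbove
  replace hC : ∀ s ∈ S, |(φ s).toAdd| ≤ C := fun s hs => by
    rw [Int.abs_eq_natAbs]; exact_mod_cast hC ⟨s, hs, rfl⟩
  obtain ⟨T, hT, hslab⟩ := exists_finite_subset_mul_of_isFiniteRelIndex hφ (H := H) C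
  obtain ⟨L, hL⟩ := exists_mul_subset_wordNbhd hS.2 H hT
  have hK : ∀ w ∈ (wordNbhd S H L)ᶜ, C < |(φ w).toAdd| :=
    fun w hw => not_le.mp fun h => hw (hL (hslab h))
  obtain ⟨z, hz⟩ := hφ (.ofAdd 1)
  obtain ⟨M₁, h₁⟩ := exists_deepComponent_pow (L := L) hS.2 hC hH (z := z) (by simp [hz])
  obtain ⟨M₂, h₂⟩ := exists_deepComponent_pow (L := L) hS.2 hC hH (z := z⁻¹) (by simp [hz])
  set M := max (max M₁ M₂) (C + 1)
  have hM₁ : M₁ ≤ M := (le_max_left _ _).trans (le_max_left _ _)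
  have hM₂ : M₂ ≤ M := (le_max_right _ _).trans (le_max_left _ _)
  refine ⟨L, z ^ M, z⁻¹ ^ M, (h₁ M hM₁).1, (h₂ M hM₂).1, fun hxy => ?_, (h₁ M hM₁).2,
    (h₂ M hM₂).2⟩
  have hCM : C + 1 ≤ M := le_max_right _ _
  have hx : (φ (z ^ M)).toAdd = M := by simp [hz]
  have hy : (φ (z⁻¹ ^ M)).toAdd = -M := by simp [hz]
  have := lt_toAdd_of_connectedInCayley hC hK hxy (by rw [hx]; omega)
  rw [hy] at this
  omega

end CoarseSeparation

theorem Submodule.exists_surjective_isFiniteRelIndex_ker {M : Type*} [AddCommGroup M]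
    [Module.Free ℤ M] [Module.Finite ℤ M] (N : Submodule ℤ M)
    (hN : finrank ℤ N + 1 = finrank ℤ M) :
    ∃ f : M →ₗ[ℤ] ℤ, Function.Surjective f ∧ N ≤ LinearMap.ker f ∧
      N.toAddSubgroup.IsFiniteRelIndex (LinearMap.ker f).toAddSubgroup := by
  obtain ⟨m, snf⟩ := N.smithNormalForm (Module.Free.chooseBasis ℤ M)
  obtain ⟨j, hj⟩ : ∃ j, j ∉ Set.range snf.f := by
    by_contra! h
    have := Fintype.card_le_of_surjective snf.f h
    have hm : finrank ℤ N = m := by rw [finrank_eq_card_basis snf.bN, Fintype.card_fin]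
    have hM := finrank_eq_card_basis snf.bM
    rw [Fintype.card_fin] at this
    omega
  set f := snf.bM.coord j
  have hf : Function.Surjective f := fun c => ⟨c • snf.bM j, by simp [f]⟩
  have hNf : N ≤ LinearMap.ker f := snf.le_ker_coord_of_notMem_range hj
  refine ⟨f, hf, hNf, ⟨AddSubgroup.index_ne_zero_of_finite (hH := ?_)⟩⟩
  have hker : finrank ℤ (LinearMap.ker f) = finrank ℤ N := by
    have h1 := (LinearMap.ker f).finrank_quotient_add_finrank
    rw [(f.quotKerEquivOfSurjective hf).finrank_eq, finrank_self] at h1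
    omega
  exact Submodule.finiteQuotientOfFreeOfRankEq (N.comap (LinearMap.ker f).subtype)
    ((Submodule.comapSubtypeEquivOfLe hNf).finrank_eq.trans hker.symm)

/-- For `n ≥ 1`, every subgroup `H ≤ ℤ^n` of rank `n - 1` is coarsely
separating in `ℤ^n`: the complement of some metric neighbourhood of `H` has at least two
connected components containing points arbitrarily far away from `H`. -/
theorem subgroup_of_Zn_coarselySeparates_of_rank_sub_one {n : ℕ} (hn : 1 ≤ n)
    (H : Subgroup (FreeAb n)) (hrk : Nonempty (H ≃* FreeAb (n - 1)))
    (S : Set (FreeAb n)) (hS : IsFinGenSet S) :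
    CoarselySeparates S (H : Set (FreeAb n)) := by
  obtain ⟨e⟩ := hrk
  set N := AddSubgroup.toIntSubmodule (Subgroup.toAddSubgroup' H)
  have hN : finrank ℤ N + 1 = finrank ℤ (Fin n → ℤ) := by
    let e' : N ≃+ (Fin (n - 1) → ℤ) := MulEquiv.toAdditive e
    rw [e'.toIntLinearEquiv.finrank_eq, finrank_fin_fun, finrank_fin_fun]
    omega
  obtain ⟨f, hf, hNf, hfin⟩ := N.exists_surjective_isFiniteRelIndex_ker hN
  have : H.IsFiniteRelIndex f.toAddMonoidHom.toMultiplicative.ker := ⟨hfin.1⟩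
  exact coarselySeparates_of_le_ker (φ := f.toAddMonoidHom.toMultiplicative) hS hf hNf
end CoarseGraph
end
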